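/- arXiv:1104.3173 — 11 statements merged into one kernel-verified Lean document; each statement's English description precedes it below -/
import Mathlib

section
/- Let $R$ be a ring and $\kappa$ an infinite regular cardinal such that every left ideal of $R$ can be generated by fewer than $\kappa$ elements. If $(M_i)_{i\in I}$ is a family of injective left $R$-modules, then the submodule of $\prod_{i\in I} M_i$ consisting of elements whose support has cardinality less than $\kappa$ is an injective $R$-module. -/
/-!
An `R`-linear map `f` from a left ideal `L` into `∏ M_i` is determined by its values on a
generating set of `L` of size `< κ`; by regularity of `κ` the union of the supports of these
values has size `< κ`, and every coordinate of `f` outside this union vanishes. Extending each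
nonzero coordinate of `f` to `R` by Baer's criterion for `M_i`, and each zero coordinate by `0`,
gives an extension `R → ∏ M_i` whose values all have support `< κ`, i.e. land in the
`κ`-restricted product.
-/

universe u

open Cardinal

/-- The `κ`-restricted direct product `∏^κ_I M_i`: the submodule of `∏_I M_i`
consisting of elements whose support has cardinality `< κ`. -/
def restrictedProd (R : Type u) [Ring R] {I : Type u} (M : I → Type u)
    [∀ i, AddCommGroup (M i)] [∀ i, Module R (M i)]
    (κ : Cardinal.{u}) (hκ : ℵ₀ ≤ κ) : Submodule R (∀ i, M i) where
  carrier := {x | #{i | x i ≠ 0} < κ}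
  zero_mem' := by
    have : {i | (0 : ∀ i, M i) i ≠ 0} = (∅ : Set I) := by
      ext i; simp
    simp only [Set.mem_setOf_eq, this, Cardinal.mk_emptyCollection]
    exact lt_of_lt_of_le (by exact_mod_cast aleph0_pos) hκ
  add_mem' := by
    intro x y hx hy
    refine lt_of_le_of_lt (le_trans (Cardinal.mk_le_mk_of_subset ?_)
      (Cardinal.mk_union_le _ _)) (Cardinal.add_lt_of_lt hκ hx hy)
    intro i hi
    by_contra h
    simp only [Set.mem_union, Set.mem_setOf_eq, not_or, not_not] at h
    exact hi (by simp [Pi.add_apply, h.1, h.2])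
  smul_mem' := by
    intro c x hx
    refine lt_of_le_of_lt (Cardinal.mk_le_mk_of_subset ?_) hx
    intro i hi
    by_contra h
    simp only [Set.mem_setOf_eq, not_not] at h
    exact hi (by simp [Pi.smul_apply, h])

namespace LinearMap

section CoordSupport

variable {R N : Type*} [Semiring R] [AddCommMonoid N] [Module R N]
  {I : Type*} {M : I → Type*} [∀ i, AddCommMonoid (M i)] [∀ i, Module R (M i)]

def coordSupport (f : N →ₗ[R] ∀ i, M i) : Set I := {i | proj i ∘ₗ f ≠ 0}

theorem support_apply_subset_coordSupport (f : N →ₗ[R] ∀ i, M i) (x : N) :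
    {i | f x i ≠ 0} ⊆ f.coordSupport := fun _ hx hf => hx congr($hf x)

theorem coordSupport_subset_iUnion {t : Set N} (ht : Submodule.span R t = ⊤)
    (f : N →ₗ[R] ∀ i, M i) : f.coordSupport ⊆ ⋃ a : t, {i | f a i ≠ 0} := by
  intro i hi
  by_contra h
  simp only [Set.mem_iUnion, Set.mem_ofPred_eq, not_exists, not_not] at h
  exact hi (ext_on ht fun a ha => h ⟨a, ha⟩)

end CoordSupport

theorem mk_coordSupport_lt_of_isRegular {R : Type*} {N I : Type u} [Semiring R] [AddCommMonoid N]
    [Module R N] {M : I → Type*} [∀ i, AddCommMonoid (M i)] [∀ i, Module R (M i)]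
    {κ : Cardinal.{u}} (hκ : κ.IsRegular) {t : Set N} (ht : Submodule.span R t = ⊤)
    (htκ : #t < κ) (f : N →ₗ[R] ∀ i, M i) (hf : ∀ a : t, #{i | f a i ≠ 0} < κ) :
    #f.coordSupport < κ :=
  (mk_le_mk_of_subset (coordSupport_subset_iUnion ht f)).trans_lt
    ((card_iUnion_lt_iff_forall_of_isRegular hκ htκ).2 hf)

end LinearMap

theorem Module.Baer.exists_pi_extension_coordSupport_subset {R : Type*} [Ring R] {I : Type*}
    {M : I → Type*} [∀ i, AddCommGroup (M i)] [∀ i, Module R (M i)]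
    (hM : ∀ i, Module.Baer R (M i)) {L : Ideal R} (f : L →ₗ[R] ∀ i, M i) :
    ∃ g : R →ₗ[R] ∀ i, M i,
      (∀ x (hx : x ∈ L), g x = f ⟨x, hx⟩) ∧ g.coordSupport ⊆ f.coordSupport := by
  have hcoord : ∀ i, ∃ gᵢ : R →ₗ[R] M i,
      (∀ x (hx : x ∈ L), gᵢ x = f ⟨x, hx⟩ i) ∧ (LinearMap.proj i ∘ₗ f = 0 → gᵢ = 0) := by
    intro i
    by_cases hi : LinearMap.proj i ∘ₗ f = 0
    · exact ⟨0, fun x hx => (congr($hi ⟨x, hx⟩) : f ⟨x, hx⟩ i = 0).symm, fun _ => rfl⟩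
    · obtain ⟨gᵢ, hgᵢ⟩ := hM i L (LinearMap.proj i ∘ₗ f)
      exact ⟨gᵢ, hgᵢ, (absurd · hi)⟩
  choose g hgf hg0 using hcoord
  exact ⟨LinearMap.pi g, fun x hx => funext fun i => hgf i x hx,
    fun i hi hfi => hi ((LinearMap.proj_pi g i).trans (hg0 i hfi))⟩

/-- If `R` is a ring and `κ` an infinite regular cardinal such that every left ideal
of `R` is generated by fewer than `κ` elements, then the `κ`-restricted product of any
family of injective left `R`-modules is injective. -/
theorem restrictedProd_injective (R : Type u) [Ring R] (κ : Cardinal.{u})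
    (hreg : κ.IsRegular)
    (hideal : ∀ L : Ideal R, ∃ s : Set R, #s < κ ∧ Ideal.span s = L)
    (I : Type u) (M : I → Type u) [∀ i, AddCommGroup (M i)] [∀ i, Module R (M i)]
    (hinj : ∀ i, Module.Injective R (M i)) :
    Module.Injective R (restrictedProd R M κ hreg.aleph0_le) := by
  refine Module.Baer.injective fun L f => ?_
  obtain ⟨s, hs, rfl⟩ := hideal L
  let P := restrictedProd R M κ hreg.aleph0_le
  have hsupp : #(P.subtype ∘ₗ f).coordSupport < κ :=
    LinearMap.mk_coordSupport_lt_of_isRegular hreg Submodule.span_span_coe_preimage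
      ((mk_preimage_of_injective _ _ Subtype.val_injective).trans_lt hs) _ fun a => (f a).2
  obtain ⟨g, hgf, hg⟩ := Module.Baer.exists_pi_extension_coordSupport_subset
    (fun i => Module.Baer.of_injective (hinj i)) (P.subtype ∘ₗ f)
  have hgP : ∀ r, g r ∈ P := fun r =>
    (mk_le_mk_of_subset ((g.support_apply_subset_coordSupport r).trans hg)).trans_lt hsupp
  exact ⟨g.codRestrict P hgP, fun x hx => Subtype.ext (hgf x hx)⟩
end

section
/- Let $R$ be a ring and $A$ a left $R$-module. Then there exist an injective $R$-module $P$, a downward directed family $(P_D)$ of injective submodules of $P$, and an isomorphism of $A$ with the intersection $\bigcap_D P_D$. Equivalently, $A$ is the inverse limit of a directed system of injective modules with injective (one-to-one) transition maps. -/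
/-!
Bergman's construction. Write `A` as the kernel of a map `f : Q → E` between injective modules.
Fix a regular cardinal `c > #R`, a directed set `Λ` with finite lower sets (finite subsets of a set
of size `c`), and let `Z ⊆ E^Λ` consist of the functions vanishing off a set of size `< c`. Since
ideals of `R` have fewer than `c` elements, Baer's criterion shows that `Z` is injective, and so is
its submodule `Z_α` of functions that also vanish on `Iic α`. In `Q × Z` the submodules
`S_α = {(q, x) | x - f q • 1_{Iic α} ∈ Z_α} ≅ Q × Z_α` decrease in `α`, and `(q, x)` lies in all of
them iff `x` is the constant function `f q`; as `#Λ = c`, small support forces `x = 0` and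
`f q = 0`, so `⋂ S_α ≅ ker f ≅ A`.
-/

open Cardinal Filter Set Submodule

section EventuallyZero

variable (R : Type*) [Semiring R] {ι : Type*} (M : Type*) [AddCommMonoid M] [Module R M]

def Submodule.eventuallyZero (l : Filter ι) : Submodule R (ι → M) where
  carrier := {x | ∀ᶠ i in l, x i = 0}
  add_mem' hx hy := by filter_upwards [hx, hy] with i hxi hyi using by simp [hxi, hyi]
  zero_mem' := Eventually.of_forall fun _ => rfl
  smul_mem' r x hx := by filter_upwards [hx] with i hi using by simp [hi]

variable {R M}

@[simp]
theorem Submodule.mem_eventuallyZero {l : Filter ι} {x : ι → M} :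
    x ∈ eventuallyZero R M l ↔ ∀ᶠ i in l, x i = 0 :=
  Iff.rfl

theorem Submodule.eventuallyZero_antitone : Antitone (eventuallyZero R M (ι := ι)) :=
  fun _ _ h _ hx => h hx

end EventuallyZero

namespace Module.Baer

theorem prod {R : Type*} [Ring R] {M N : Type*} [AddCommGroup M] [Module R M] [AddCommGroup N]
    [Module R N] (hM : Baer R M) (hN : Baer R N) : Baer R (M × N) := by
  intro I g
  obtain ⟨g₁, h₁⟩ := hM I (LinearMap.fst R M N ∘ₗ g)
  obtain ⟨g₂, h₂⟩ := hN I (LinearMap.snd R M N ∘ₗ g)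
  exact ⟨g₁.prod g₂, fun x hx => Prod.ext (h₁ x hx) (h₂ x hx)⟩

theorem eventuallyZero {R ι : Type u} [Ring R] {M : Type*} [AddCommGroup M] [Module R M]
    (hM : Baer R M) {l : Filter ι} {c : Cardinal.{u}} [CardinalInterFilter l c] (hR : #R < c) :
    Baer R (eventuallyZero R M l) := by
  intro I g
  -- extending by `0` where the `i`-th coordinate of `g` vanishes keeps the extension in `Z`
  have coord (i : ι) : ∃ h : R →ₗ[R] M, (∀ x (hx : x ∈ I), h x = (g ⟨x, hx⟩ : ι → M) i) ∧
      ((∀ y : I, (g y : ι → M) i = 0) → h = 0) := by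
    by_cases h0 : ∀ y : I, (g y : ι → M) i = 0
    · exact ⟨0, fun x hx => (h0 ⟨x, hx⟩).symm, fun _ => rfl⟩
    · obtain ⟨h, hh⟩ := hM I (LinearMap.proj i ∘ₗ (Submodule.eventuallyZero R M l).subtype ∘ₗ g)
      exact ⟨h, hh, fun h0' => absurd h0' h0⟩
  choose h hext hzero using coord
  -- `I` has fewer than `c` elements, so the zero sets of all `g y` meet in a set of `l`
  have hI : ∀ᶠ i in l, ∀ y : I, (g y : ι → M) i = 0 :=
    (eventually_cardinal_forall ((mk_subtype_le _).trans_lt hR)).2 fun y => (g y).2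
  have hmem (r : R) : (fun i => h i r) ∈ Submodule.eventuallyZero R M l := by
    filter_upwards [hI] with i hi
    rw [hzero i hi, LinearMap.zero_apply]
  exact ⟨LinearMap.codRestrict _ (LinearMap.pi h) hmem,
    fun x hx => Subtype.ext (funext fun i => hext i x hx)⟩

end Module.Baer

theorem exists_injective_embedding (R : Type u) [Ring R] (M : Type u) [AddCommGroup M]
    [Module R M] : ∃ (Q : ModuleCat.{u} R) (i : M →ₗ[R] Q),
      Module.Injective R Q ∧ Function.Injective i :=
  have := CategoryTheory.Injective.injective_under (ModuleCat.of R M)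
  ⟨_, (CategoryTheory.Injective.ι (ModuleCat.of R M)).hom,
    Module.injective_module_of_injective_object R _,
    (ModuleCat.mono_iff_injective _).mp inferInstance⟩

theorem exists_injective_copresentation (R : Type u) [Ring R] (A : Type u) [AddCommGroup A]
    [Module R A] : ∃ (Q E : ModuleCat.{u} R) (f : Q →ₗ[R] E),
      Module.Injective R Q ∧ Module.Injective R E ∧ Nonempty (A ≃ₗ[R] LinearMap.ker f) := by
  obtain ⟨Q, i, hQ, hi⟩ := exists_injective_embedding R A
  obtain ⟨E, j, hE, hj⟩ := exists_injective_embedding R (Q ⧸ LinearMap.range i)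
  have hker : LinearMap.ker (j ∘ₗ (LinearMap.range i).mkQ) = LinearMap.range i := by
    rw [LinearMap.ker_comp, LinearMap.ker_eq_bot.mpr hj, Submodule.comap_bot, Submodule.ker_mkQ]
  exact ⟨Q, E, _, hQ, hE, ⟨(LinearEquiv.ofInjective i hi).trans (LinearEquiv.ofEq _ _ hker.symm)⟩⟩

noncomputable section ConstBelow

variable (R : Type*) [Semiring R] {Λ : Type*} [Preorder Λ] (E : Type*) [AddCommMonoid E]
  [Module R E]

def constBelow (α : Λ) : E →ₗ[R] Λ → E where
  toFun e := (Iic α).indicator fun _ => e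
  map_add' e e' := indicator_add' _ _ _
  map_smul' r e := by ext j; by_cases hj : j ∈ Iic α <;> simp [hj]

variable {R E}

theorem constBelow_mem {l : Filter Λ} (hl : ∀ α, (Iic α)ᶜ ∈ l) (α : Λ) (e : E) :
    constBelow R E α e ∈ eventuallyZero R E l := by
  filter_upwards [hl α] with j hj using indicator_of_notMem hj fun _ => e

end ConstBelow

noncomputable section Bergman

variable {R : Type*} [Ring R] {Λ : Type*} [Preorder Λ] {E : Type*} [AddCommGroup E] [Module R E]
variable {l : Filter Λ} (hl : ∀ α, (Iic α)ᶜ ∈ l)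
include hl

theorem constBelow_sub_mem {α β : Λ} (h : α ≤ β) (e : E) :
    constBelow R E β e - constBelow R E α e ∈ eventuallyZero R E (l ⊔ 𝓟 (Iic α)) := by
  rw [mem_eventuallyZero, eventually_sup, eventually_principal]
  refine ⟨?_, fun j hj => ?_⟩
  · filter_upwards [constBelow_mem (R := R) hl α e, constBelow_mem (R := R) hl β e] with j h₁ h₂
    simp [h₁, h₂]
  · simp [constBelow, indicator_of_mem hj, indicator_of_mem (Iic_subset_Iic.2 h hj)]

variable {Q : Type*} [AddCommGroup Q] [Module R Q] (f : Q →ₗ[R] E)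

def bergmanMap (α : Λ) :
    Q × eventuallyZero R E (l ⊔ 𝓟 (Iic α)) →ₗ[R] Q × eventuallyZero R E l :=
  (LinearMap.fst R Q _).prod <| LinearMap.codRestrict _
    ((eventuallyZero R E _).subtype ∘ₗ LinearMap.snd R Q _ +
      constBelow R E α ∘ₗ f ∘ₗ LinearMap.fst R Q _)
    fun p => add_mem (eventuallyZero_antitone le_sup_left p.2.2) (constBelow_mem hl α _)

theorem bergmanMap_fst (α : Λ) (p : Q × eventuallyZero R E (l ⊔ 𝓟 (Iic α))) :
    (bergmanMap hl f α p).1 = p.1 :=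
  rfl

theorem coe_bergmanMap_snd (α : Λ) (p : Q × eventuallyZero R E (l ⊔ 𝓟 (Iic α))) :
    ((bergmanMap hl f α p).2 : Λ → E) = p.2 + constBelow R E α (f p.1) :=
  rfl

theorem bergmanMap_injective (α : Λ) : Function.Injective (bergmanMap hl f α) := by
  rintro ⟨q, d⟩ ⟨q', d'⟩ h
  obtain ⟨rfl, h₂⟩ := Prod.ext_iff.1 h
  exact Prod.ext rfl (Subtype.ext (add_right_cancel (congrArg Subtype.val h₂)))

theorem mem_range_bergmanMap {α : Λ} {p : Q × eventuallyZero R E l} :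
    p ∈ LinearMap.range (bergmanMap hl f α) ↔
      (p.2 : Λ → E) - constBelow R E α (f p.1) ∈ eventuallyZero R E (l ⊔ 𝓟 (Iic α)) := by
  constructor
  · rintro ⟨⟨q, d⟩, rfl⟩
    simpa only [bergmanMap_fst, coe_bergmanMap_snd, add_sub_cancel_right] using d.2
  · intro h
    exact ⟨(p.1, ⟨_, h⟩), Prod.ext rfl (Subtype.ext (sub_add_cancel _ _))⟩

theorem range_bergmanMap_antitone : Antitone fun α => LinearMap.range (bergmanMap hl f α) := by
  intro α β h p hp
  rw [mem_range_bergmanMap] at hp ⊢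
  have hle : l ⊔ 𝓟 (Iic α) ≤ l ⊔ 𝓟 (Iic β) :=
    sup_le_sup_left (principal_mono.2 (Iic_subset_Iic.2 h)) l
  convert add_mem (eventuallyZero_antitone hle hp) (constBelow_sub_mem hl h (f p.1)) using 1
  abel

theorem iInf_range_bergmanMap [l.NeBot] : ⨅ α, LinearMap.range (bergmanMap hl f α) =
    (LinearMap.ker f).map (LinearMap.inl R Q (eventuallyZero R E l)) := by
  ext ⟨q, x⟩
  simp only [Submodule.mem_iInf, mem_range_bergmanMap, Submodule.mem_map, LinearMap.mem_ker,
    LinearMap.inl_apply]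
  constructor
  · intro h
    have hx (i : Λ) : (x : Λ → E) i = f q := by
      have := eventually_principal.1 (eventually_sup.1 (h i)).2 i le_rfl
      simpa [constBelow, sub_eq_zero] using this
    have hfq : f q = 0 := by
      have := x.2
      simp only [mem_eventuallyZero, hx, eventually_const] at this
      exact this
    exact ⟨q, hfq, Prod.ext rfl (Subtype.ext (funext fun i => by simp [hx, hfq]))⟩
  · rintro ⟨q, hq, h⟩ α
    obtain ⟨rfl, rfl⟩ := Prod.ext_iff.1 h
    simp [hq]

end Bergman

section DirectedInter

def IsDirectedInterOfInjectives (R : Type u) [Ring R] (A : Type u) [AddCommGroup A]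
    [Module R A] : Prop :=
  ∃ (P : ModuleCat.{u} R), Module.Injective R P ∧
    ∃ (ι : Type u) (S : ι → Submodule R P),
      Nonempty ι ∧
      (∀ i, Module.Injective R (S i)) ∧
      (∀ i j : ι, ∃ k : ι, S k ≤ S i ⊓ S j) ∧
      Nonempty (A ≃ₗ[R] ↥(⨅ i, S i))

variable {R : Type u} [Ring R]

theorem IsDirectedInterOfInjectives.of_linearEquiv {A B : Type u} [AddCommGroup A] [Module R A]
    [AddCommGroup B] [Module R B] (h : IsDirectedInterOfInjectives R B) (e : A ≃ₗ[R] B) :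
    IsDirectedInterOfInjectives R A := by
  obtain ⟨P, hP, ι, S, hι, hS, hdir, ⟨e'⟩⟩ := h
  exact ⟨P, hP, ι, S, hι, hS, hdir, ⟨e.trans e'⟩⟩

theorem isDirectedInterOfInjectives_ker_of_filter {Q E : Type u} [AddCommGroup Q] [Module R Q]
    [AddCommGroup E] [Module R E] [Module.Injective R Q] [Module.Injective R E] (f : Q →ₗ[R] E)
    {Λ : Type u} [Preorder Λ] [IsDirected Λ (· ≤ ·)] [Nonempty Λ] {l : Filter Λ} [l.NeBot]
    (hl : ∀ α, (Iic α)ᶜ ∈ l) {c : Cardinal.{u}} [CardinalInterFilter l c] (hR : #R < c) :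
    IsDirectedInterOfInjectives R (LinearMap.ker f) := by
  have hQ : Module.Baer R Q := .of_injective ‹_›
  have hE : Module.Baer R E := .of_injective ‹_›
  refine ⟨ModuleCat.of R (Q × eventuallyZero R E l), (hQ.prod (hE.eventuallyZero hR)).injective,
    Λ, fun α => LinearMap.range (bergmanMap hl f α), inferInstance, fun α => ?_, fun α β => ?_,
    ⟨(Submodule.equivMapOfInjective _ LinearMap.inl_injective _).trans
      (LinearEquiv.ofEq _ _ (iInf_range_bergmanMap hl f).symm)⟩⟩
  · exact ((hQ.prod (hE.eventuallyZero hR)).of_equiv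
      (LinearEquiv.ofInjective _ (bergmanMap_injective hl f α))).injective
  · obtain ⟨γ, hαγ, hβγ⟩ := directed_of (· ≤ ·) α β
    exact ⟨γ, le_inf (range_bergmanMap_antitone hl f hαγ) (range_bergmanMap_antitone hl f hβγ)⟩

theorem isDirectedInterOfInjectives_ker {Q E : Type u} [AddCommGroup Q] [Module R Q]
    [AddCommGroup E] [Module R E] [Module.Injective R Q] [Module.Injective R E]
    (f : Q →ₗ[R] E) : IsDirectedInterOfInjectives R (LinearMap.ker f) := by
  classical
  set c := Order.succ (ℵ₀ ⊔ #R)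
  have hc : c.IsRegular := isRegular_succ le_sup_left
  have : Infinite c.out :=
    infinite_iff.2 (by rw [mk_out]; exact le_sup_left.trans (Order.le_succ _))
  let l := cocardinal (Finset c.out) hc
  have : (l ⊓ 𝓟 univ).NeBot :=
    cocardinal_inf_principal_neBot_iff.2 (by rw [mk_univ, mk_finset_of_infinite, mk_out])
  rw [principal_univ, inf_top_eq] at this
  exact isDirectedInterOfInjectives_ker_of_filter f
    (fun α : Finset c.out => (Set.finite_Iic α).compl_mem_cocardinal (hreg := hc))
    (le_sup_right.trans_lt (Order.lt_succ _) : #R < c)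

end DirectedInter

/-- Every left `R`-module `A` can be written as the intersection of a downward directed
family of injective submodules of an injective module; equivalently, as the inverse limit
of a system of injective modules and one-to-one homomorphisms. -/
theorem module_eq_inter_of_injectives (R : Type u) [Ring R]
    (A : Type u) [AddCommGroup A] [Module R A] :
    ∃ (P : ModuleCat.{u} R), Module.Injective R P ∧
      ∃ (ι : Type u) (S : ι → Submodule R P),
        Nonempty ι ∧
        (∀ i, Module.Injective R (S i)) ∧
        (∀ i j : ι, ∃ k : ι, S k ≤ S i ⊓ S j) ∧
        Nonempty (A ≃ₗ[R] ↥(⨅ i, S i)) := by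
  obtain ⟨Q, E, f, hQ, hE, ⟨e⟩⟩ := exists_injective_copresentation R A
  exact (isDirectedInterOfInjectives_ker f).of_linearEquiv e
end

section
/- Let $R$ be a left Noetherian ring and $A$ a left $R$-module. Then $A$ can be written as the inverse limit of an inverse system indexed by the first uncountable ordinal $\omega_1$ in which all modules are injective left $R$-modules and all transition maps are surjective. -/
universe u v

/-- The first uncountable ordinal `ω₁`, as a linearly ordered index type. -/
def Omega1 : Type 1 := {o : Ordinal.{0} // o < (Cardinal.aleph 1).ord}

noncomputable instance : LinearOrder Omega1 := by unfold Omega1; infer_instance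

/-- The inverse limit of an inverse system of modules, realized as the submodule of the
direct product consisting of the compatible families. -/
def invLim {R : Type u} [Ring R] {ι : Type v} [Preorder ι] (P : ι → Type u)
    [∀ i, AddCommGroup (P i)] [∀ i, Module R (P i)]
    (φ : ∀ i j : ι, i ≤ j → (P j →ₗ[R] P i)) : Submodule R (∀ i, P i) where
  carrier := {x | ∀ (i j : ι) (h : i ≤ j), φ i j h (x j) = x i}
  zero_mem' := by intro i j h; simp
  add_mem' := by intro a b ha hb i j h; simp [ha i j h, hb i j h]
  smul_mem' := by intro c a ha i j h; simp [ha i j h]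

/-!
Choose an injective copresentation `0 → A → E → E'` with `f : E → E'`, and an `ω₁`-indexed
inverse system of nonempty sets `X a` with surjective maps but no thread: the coinfinite
injections of the `a`-th initial segment of `ω₁` into `ℕ`. The modules
`P a = {(e, v) ∈ E × (X a →₀ E') | f e = Σ v}` are direct summands of `E × (X a →₀ E')`,
which is injective because `R` is Noetherian, and `X` induces surjective maps between them.
A thread of `P` has a constant first coordinate `e` and a compatible family `v` of finitely
supported second coordinates. Such a family vanishes: over `ω₁` the images of the later
supports stabilise to finite nonempty sets, and a thread through those (Kőnig) would be a thread
of `X`. Hence `f e = 0`, and the limit is `ker f ≅ A`.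
-/

open Cardinal Function Set

def CoinfiniteEmb (α : Type*) : Type _ :=
  {f : α → ℕ // Injective f ∧ (range f)ᶜ.Infinite}

namespace CoinfiniteEmb

variable {α β : Type*}

def comap (j : α ↪ β) (f : CoinfiniteEmb β) : CoinfiniteEmb α :=
  ⟨f.1 ∘ j, f.2.1.comp j.injective,
    f.2.2.mono (compl_subset_compl.mpr (range_comp_subset_range _ _))⟩

-- The values off the image of `j` go to odd positions of an enumeration of the gaps of `f`,
-- so the even positions stay free.
theorem comap_surjective [Countable β] (j : α ↪ β) : Surjective (comap j) := by
  intro f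
  obtain ⟨cnt, hcnt⟩ := Countable.exists_injective_nat β
  let gap : ℕ ↪ ↥(range f.1)ᶜ := f.2.2.natEmbedding
  have gap_ne (n : ℕ) (x : α) : (gap n : ℕ) ≠ f.1 x := fun h => (gap n).2 ⟨x, h.symm⟩
  have gap_inj {m n : ℕ} (h : (gap m : ℕ) = gap n) : m = n := gap.injective (Subtype.ext h)
  let g : β → ℕ := extend j f.1 fun y => gap (2 * cnt y + 1)
  have hgj (x : α) : g (j x) = f.1 x := j.injective.extend_apply _ _ x
  have hg (y : β) : (∃ x, y = j x ∧ g y = f.1 x) ∨ g y = gap (2 * cnt y + 1) := by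
    by_cases hy : ∃ x, j x = y
    · obtain ⟨x, rfl⟩ := hy
      exact Or.inl ⟨x, rfl, hgj x⟩
    · exact Or.inr (extend_apply' _ _ _ hy)
  refine ⟨⟨g, ?_, ?_⟩, Subtype.ext (funext hgj)⟩
  · intro y₁ y₂ h
    rcases hg y₁ with ⟨x₁, rfl, h₁⟩ | h₁ <;> rcases hg y₂ with ⟨x₂, rfl, h₂⟩ | h₂ <;>
      rw [h₁, h₂] at h
    · rw [f.2.1 h]
    · exact absurd h.symm (gap_ne _ _)
    · exact absurd h (gap_ne _ _)
    · exact hcnt (by have := gap_inj h; omega)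
  · refine infinite_of_injective_forall_mem (f := fun n => (gap (2 * n) : ℕ))
      (fun m n h => by have := gap_inj h; omega) ?_
    rintro n ⟨y, hy⟩
    rcases hg y with ⟨x, -, h⟩ | h <;> rw [h] at hy
    · exact gap_ne _ x hy.symm
    · have := gap_inj hy; omega

instance [Countable α] : Nonempty (CoinfiniteEmb α) :=
  have : Nonempty (CoinfiniteEmb Empty) :=
    ⟨⟨Empty.elim, injective_of_subsingleton _, by
      rw [range_eq_empty, compl_empty]
      exact infinite_univ⟩⟩
  (comap_surjective (Embedding.ofIsEmpty : Empty ↪ α)).nonempty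

end CoinfiniteEmb

theorem not_exists_compatible_injective_nat {ι β : Type*} [Preorder ι] [IsDirectedOrder ι]
    [Uncountable β] (s : ι → Set β) (hs : Monotone s) (hcover : ∀ w, ∃ a, w ∈ s a) :
    ¬∃ t : ∀ a, s a → ℕ, (∀ a, Injective (t a)) ∧
      ∀ a b (h : a ≤ b) x, t b (inclusion (hs h) x) = t a x := by
  rintro ⟨t, ht_inj, ht⟩
  choose idx hidx using hcover
  have : Injective fun w => t (idx w) ⟨w, hidx w⟩ := by
    intro w₁ w₂ h
    obtain ⟨c, h₁, h₂⟩ := exists_ge_ge (idx w₁) (idx w₂)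
    dsimp only at h
    rw [← ht _ c h₁, ← ht _ c h₂] at h
    exact congrArg Subtype.val (ht_inj c h)
  exact not_countable this.countable

open CategoryTheory Opposite in
theorem InverseSystem.exists_thread_of_finite {ι : Type*} [Preorder ι] [IsDirectedOrder ι]
    {F : ι → Type*} {ρ : ∀ ⦃i j : ι⦄, i ≤ j → F j → F i} [InverseSystem ρ]
    (T : ∀ i, Set (F i)) (hfin : ∀ i, (T i).Finite) (hne : ∀ i, (T i).Nonempty)
    (hT : ∀ ⦃i j⦄ (h : i ≤ j), MapsTo (ρ h) (T j) (T i)) :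
    ∃ t : ∀ i, F i, ∀ ⦃i j⦄ (h : i ≤ j), ρ h (t j) = t i := by
  let G : ιᵒᵖ ⥤ Type _ :=
    { obj := fun i => T i.unop
      map := fun f => TypeCat.ofHom fun x => ⟨ρ f.unop.le x, hT f.unop.le x.2⟩
      map_id := fun _ => ConcreteCategory.hom_ext _ _ fun x =>
        Subtype.ext (InverseSystem.map_self _)
      map_comp := fun _ _ => ConcreteCategory.hom_ext _ _ fun x =>
        Subtype.ext (InverseSystem.map_map _ _ _).symm }
  have (i : ιᵒᵖ) : Finite (G.obj i) := (hfin i.unop).to_subtype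
  have (i : ιᵒᵖ) : Nonempty (G.obj i) := (hne i.unop).to_subtype
  obtain ⟨t, ht⟩ := nonempty_sections_of_finite_inverse_system G
  exact ⟨fun i => t (op i), fun i j h => congrArg Subtype.val (ht (homOfLE h).op)⟩

namespace Omega1

instance : Nonempty Omega1 := ⟨⟨0, (isSuccLimit_ord (aleph0_le_aleph 1)).bot_lt⟩⟩

instance : NoMaxOrder Omega1 :=
  ⟨fun a => ⟨⟨Order.succ a.1, (isSuccLimit_ord (aleph0_le_aleph 1)).succ_lt a.2⟩,
    Order.lt_succ a.1⟩⟩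

theorem bddAbove_range {ι : Type} [Countable ι] (s : ι → Omega1) : BddAbove (range s) := by
  have hlt : ⨆ i, (s i).1 < (aleph 1).ord := by
    refine Ordinal.iSup_lt_of_lt_cof ?_ fun i => (s i).2
    rw [isRegular_aleph_one.cof_ord]
    exact mk_le_aleph0.trans_lt aleph0_lt_aleph_one
  exact ⟨⟨_, hlt⟩, forall_mem_range.mpr fun i => Ordinal.le_iSup (fun i => (s i).1) i⟩

theorem finite_iUnion_of_monotone {α : Type*} {S : Omega1 → Set α} (hS : Monotone S)
    (hfin : ∀ a, (S a).Finite) : (⋃ a, S a).Finite := by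
  have hbdd : BddAbove (range fun a => (S a).ncard) := by
    by_contra h
    choose s hs using fun n : ℕ => show ∃ a, n < (S a).ncard by
      obtain ⟨_, ⟨a, rfl⟩, ha⟩ := not_bddAbove_iff.mp h n
      exact ⟨a, ha⟩
    obtain ⟨b, hb⟩ := bddAbove_range s
    exact (hs (S b).ncard).not_ge (ncard_le_ncard (hS (hb (mem_range_self _))) (hfin b))
  obtain ⟨x, hx⟩ := Nat.sSup_mem (range_nonempty _) hbdd
  refine (hfin x).subset (iUnion_subset fun a => ?_)
  have hmax : (S (max a x)).ncard ≤ (S x).ncard :=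
    (le_csSup hbdd (mem_range_self (max a x))).trans_eq hx.symm
  have : S x = S (max a x) := eq_of_subset_of_ncard_le (hS le_sup_right) hmax (hfin _)
  exact (hS le_sup_left).trans this.ge

theorem finsupp_eq_zero_of_compatible {F : Omega1 → Type*}
    {ρ : ∀ ⦃a b : Omega1⦄, a ≤ b → F b → F a} [InverseSystem ρ]
    (hρ : ¬∃ t : ∀ a, F a, ∀ ⦃a b⦄ (h : a ≤ b), ρ h (t b) = t a)
    {M : Type*} [AddCommMonoid M] (n : ∀ a, F a →₀ M)
    (hn : ∀ ⦃a b⦄ (h : a ≤ b), Finsupp.mapDomain (ρ h) (n b) = n a) (a₀ : Omega1) :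
    n a₀ = 0 := by
  classical
  by_contra h₀
  have image_mono {a d d' : Omega1} (h : a ≤ d) (h' : d ≤ d') :
      ρ h '' (n d).support ⊆ ρ (h.trans h') '' (n d').support := by
    rintro _ ⟨s, hs, rfl⟩
    rw [← hn h'] at hs
    obtain ⟨s', hs', rfl⟩ := Finset.mem_image.mp (Finsupp.mapDomain_support hs)
    exact ⟨s', hs', (InverseSystem.map_map (f := ρ) _ _ _).symm⟩
  -- `T a` collects the images of all later supports: an `ω₁`-chain of finite sets, hence finite.
  let T (a : Omega1) : Set (F a) := ⋃ b, ρ (le_max_left a b) '' (n (max a b)).support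
  refine hρ (InverseSystem.exists_thread_of_finite T (fun a => ?_) (fun a => ?_) fun a b h => ?_)
  · exact finite_iUnion_of_monotone (fun b b' hb => image_mono _ (max_le_max_left a hb))
      fun b => (Finset.finite_toSet _).image _
  · have hne : n (max a a₀) ≠ 0 := fun h =>
      h₀ (by rw [← hn le_sup_right, h, Finsupp.mapDomain_zero])
    exact (((Finsupp.support_nonempty_iff.mpr hne).to_set).image _).mono
      (subset_iUnion_of_subset a₀ subset_rfl)
  · rintro _ ⟨_, ⟨c, rfl⟩, s, hs, rfl⟩
    refine mem_iUnion_of_mem (max b c) (image_mono (h.trans le_sup_left) le_sup_right ?_)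
    exact ⟨s, hs, (InverseSystem.map_map (f := ρ) _ _ _).symm⟩

-- `Omega1` lives in `Type 1`; its copy in `Type` provides index sets for modules in `Type`.
noncomputable def orderIsoToType : Omega1 ≃o (aleph 1).ord.ToType := Ordinal.ToType.mk

instance (w : (aleph 1).ord.ToType) : Countable (Iio w) := by
  have : {x | x < w}.Countable := by simpa using mk_Iio_lt w (by simp)
  exact this.to_subtype

instance : Uncountable (aleph 1).ord.ToType :=
  aleph0_lt_mk_iff.mp (by simp)

def CoinfEmbBelow (a : Omega1) : Type := CoinfiniteEmb (Iio (orderIsoToType a))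

def restrict ⦃a b : Omega1⦄ (h : a ≤ b) : CoinfEmbBelow b → CoinfEmbBelow a :=
  CoinfiniteEmb.comap (embeddingOfSubset _ _ (Iio_subset_Iio (orderIsoToType.monotone h)))

instance : InverseSystem restrict := ⟨fun _ _ => rfl, fun _ _ _ _ _ _ => rfl⟩

instance (a : Omega1) : Nonempty (CoinfEmbBelow a) :=
  inferInstanceAs (Nonempty (CoinfiniteEmb _))

theorem restrict_surjective ⦃a b : Omega1⦄ (h : a ≤ b) : Surjective (restrict h) :=
  CoinfiniteEmb.comap_surjective _

theorem not_exists_thread :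
    ¬∃ t : ∀ a, CoinfEmbBelow a, ∀ ⦃a b⦄ (h : a ≤ b), restrict h (t b) = t a := by
  rintro ⟨t, ht⟩
  refine not_exists_compatible_injective_nat (fun a => Iio (orderIsoToType a))
    (fun a b h => Iio_subset_Iio (orderIsoToType.monotone h)) (fun w => ?_)
    ⟨fun a => (t a).1, fun a => (t a).2.1, fun _ _ h => congrFun (congrArg Subtype.val (ht h))⟩
  obtain ⟨a, ha⟩ := exists_gt (orderIsoToType.symm w)
  exact ⟨a, orderIsoToType.symm_apply_lt.mp ha⟩

end Omega1

namespace Module.Injective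

variable {R : Type*} [Ring R]

instance prod {X Y : Type v} [AddCommGroup X] [AddCommGroup Y] [Module R X] [Module R Y]
    [Module.Injective R X] [Module.Injective R Y] : Module.Injective R (X × Y) := by
  constructor
  intro A B _ _ _ _ f hf g
  obtain ⟨gX, hgX⟩ := Module.Injective.out f hf (LinearMap.fst R X Y ∘ₗ g)
  obtain ⟨gY, hgY⟩ := Module.Injective.out f hf (LinearMap.snd R X Y ∘ₗ g)
  exact ⟨gX.prod gY, fun m => Prod.ext (hgX m) (hgY m)⟩

theorem of_retract {Q K : Type v} [AddCommGroup Q] [AddCommGroup K] [Module R Q] [Module R K]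
    [Module.Injective R Q] (i : K →ₗ[R] Q) (p : Q →ₗ[R] K) (hpi : p ∘ₗ i = LinearMap.id) :
    Module.Injective R K := by
  constructor
  intro A B _ _ _ _ f hf g
  obtain ⟨h, hh⟩ := Module.Injective.out f hf (i ∘ₗ g)
  exact ⟨p ∘ₗ h, fun m => by simp [hh m, ← LinearMap.comp_apply p i, hpi]⟩

-- Over a Noetherian ring every ideal is finitely generated, so a map from it lands in finitely
-- many coordinates, where `ι →₀ Q` agrees with an injective product.
theorem finsupp [IsNoetherianRing R] {Q : Type v} [AddCommGroup Q] [Module R Q] [Small.{v} R]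
    [Module.Injective R Q] (ι : Type v) : Module.Injective R (ι →₀ Q) := by
  refine Module.Baer.injective fun I g => ?_
  classical
  obtain ⟨s, hs⟩ := (Module.Finite.fg_top (R := R) (M := I)).map g
  let T : Finset ι := s.biUnion Finsupp.support
  have hrange : LinearMap.range g ≤ Finsupp.supported Q R (T : Set ι) := by
    rw [LinearMap.range_eq_map, ← hs, Submodule.span_le]
    exact fun v hv => (Finsupp.mem_supported _ _).mpr fun x hx =>
      Finset.mem_biUnion.mpr ⟨v, hv, hx⟩
  have hT : Module.Baer R (Finsupp.supported Q R (T : Set ι)) :=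
    .of_equiv
      ((Finsupp.supportedEquivFinsupp _).trans (Finsupp.linearEquivFunOnFinite R Q _)).symm
      (.of_injective inferInstance)
  obtain ⟨h, hh⟩ := hT I (g.codRestrict _ fun x => hrange (LinearMap.mem_range_self g x))
  exact ⟨Submodule.subtype _ ∘ₗ h, fun x hx => congrArg Subtype.val (hh x hx)⟩

end Module.Injective

section SumPullback

variable {R : Type*} [Ring R] {M N : Type*} [AddCommGroup M] [Module R M] [AddCommGroup N]
  [Module R N] (f : M →ₗ[R] N) {X Y Z : Type*}

variable (R N X) in
noncomputable def Finsupp.valueSum : (X →₀ N) →ₗ[R] N :=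
  Finsupp.lsum ℕ fun _ => LinearMap.id

@[simp]
theorem Finsupp.valueSum_single (x : X) (c : N) : valueSum R N X (single x c) = c := by
  simp [valueSum]

@[simp]
theorem Finsupp.valueSum_mapDomain (g : X → Y) (v : X →₀ N) :
    valueSum R N Y (mapDomain g v) = valueSum R N X v := by
  induction v using Finsupp.induction_linear with
  | zero => simp
  | add v w hv hw => simp [mapDomain_add, hv, hw]
  | single x c => simp

variable (X) in
noncomputable def sumPullback : Submodule R (M × (X →₀ N)) :=
  LinearMap.eqLocus (f ∘ₗ LinearMap.fst R M _) (Finsupp.valueSum R N X ∘ₗ LinearMap.snd R M _)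

theorem mem_sumPullback {p : M × (X →₀ N)} :
    p ∈ sumPullback f X ↔ f p.1 = Finsupp.valueSum R N X p.2 := Iff.rfl

namespace sumPullback

noncomputable def map (g : X → Y) : sumPullback f X →ₗ[R] sumPullback f Y :=
  (LinearMap.id.prodMap (Finsupp.lmapDomain N R g)).restrict fun p hp => by
    simpa [mem_sumPullback] using hp

@[simp]
theorem map_apply_fst (g : X → Y) (p : sumPullback f X) : (map f g p).1.1 = p.1.1 := rfl

@[simp]
theorem map_apply_snd (g : X → Y) (p : sumPullback f X) :
    (map f g p).1.2 = Finsupp.mapDomain g p.1.2 := rfl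

theorem map_id : map f (id : X → X) = LinearMap.id := by
  ext p <;> simp

theorem map_comp (g : X → Y) (g' : Y → Z) : map f (g' ∘ g) = map f g' ∘ₗ map f g := by
  ext p <;> simp [Finsupp.mapDomain_comp]

theorem map_surjective {g : X → Y} (hg : Function.Surjective g) :
    Function.Surjective (map f g) := by
  intro p
  refine ⟨⟨(p.1.1, Finsupp.mapDomain (Function.surjInv hg) p.1.2), ?_⟩, ?_⟩
  · exact ((mem_sumPullback f).mp p.2).trans (Finsupp.valueSum_mapDomain _ _).symm
  · ext <;> simp [← Finsupp.mapDomain_comp, Function.comp_surjInv hg]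

variable (X) in
noncomputable def ofKer : LinearMap.ker f →ₗ[R] sumPullback f X :=
  (LinearMap.inl R M (X →₀ N) ∘ₗ (LinearMap.ker f).subtype).codRestrict _ fun m => by
    simp [mem_sumPullback]

theorem map_comp_ofKer (g : X → Y) : map f g ∘ₗ ofKer f X = ofKer f Y :=
  LinearMap.ext fun _ => Subtype.ext (Prod.ext rfl (Finsupp.mapDomain_zero (f := g)))

end sumPullback

end SumPullback

namespace sumPullback

-- `(m, v) ↦ (m, v + single x₀ (f m - Σ v))` is a retraction of `M × (X →₀ N)` onto the pullback.
theorem injective {R : Type*} [Ring R] [IsNoetherianRing R] [Small.{v} R] {M N : Type v}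
    [AddCommGroup M] [Module R M] [AddCommGroup N] [Module R N]
    [Module.Injective R M] [Module.Injective R N]
    (f : M →ₗ[R] N) (X : Type v) [Nonempty X] : Module.Injective R (sumPullback f X) := by
  have := Module.Injective.finsupp (R := R) (Q := N) X
  let defect := f ∘ₗ LinearMap.fst R M _ - Finsupp.valueSum R N X ∘ₗ LinearMap.snd R M _
  let x₀ := Classical.arbitrary X
  let r := LinearMap.id + LinearMap.inr R M _ ∘ₗ Finsupp.lsingle x₀ ∘ₗ defect
  have hr (p) : r p ∈ sumPullback f X := by
    simp [r, defect, mem_sumPullback]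
  refine Module.Injective.of_retract (sumPullback f X).subtype (r.codRestrict _ hr) ?_
  ext p : 2
  have hp : defect p = 0 := sub_eq_zero.mpr ((mem_sumPullback f).mp p.2)
  simp [r, hp]

theorem nonempty_ker_equiv_invLim {R : Type u} [Ring R] {M N : Type u} [AddCommGroup M]
    [Module R M] [AddCommGroup N] [Module R N] (f : M →ₗ[R] N) {ι : Type*} [Preorder ι]
    [IsDirectedOrder ι] [Nonempty ι] {X : ι → Type u} {ρ : ∀ ⦃a b : ι⦄, a ≤ b → X b → X a}
    (hX : ∀ n : ∀ a, X a →₀ N,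
      (∀ ⦃a b⦄ (h : a ≤ b), Finsupp.mapDomain (ρ h) (n b) = n a) → ∀ a, n a = 0) :
    Nonempty (LinearMap.ker f ≃ₗ[R]
      invLim (fun a => sumPullback f (X a)) fun _ _ h => map f (ρ h)) := by
  let L : LinearMap.ker f →ₗ[R]
      invLim (fun a => sumPullback f (X a)) fun _ _ h => map f (ρ h) :=
    (LinearMap.pi fun a => ofKer f (X a)).codRestrict _ fun m _ _ h =>
      LinearMap.congr_fun (map_comp_ofKer f (ρ h)) m
  refine ⟨LinearEquiv.ofBijective L ⟨fun m m' h => ?_, fun p => ?_⟩⟩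
  · exact Subtype.ext (congrArg (fun p => (p.1 (Classical.arbitrary ι)).1.1) h)
  have hsnd : ∀ a, (p.1 a).1.2 = 0 := hX _ fun a b h => congrArg (fun q => q.1.2) (p.2 a b h)
  have hfst (a b : ι) : (p.1 a).1.1 = (p.1 b).1.1 := by
    obtain ⟨c, hac, hbc⟩ := exists_ge_ge a b
    rw [← p.2 a c hac, ← p.2 b c hbc]
    rfl
  let a₀ := Classical.arbitrary ι
  have hker : (p.1 a₀).1.1 ∈ LinearMap.ker f := by
    simpa [hsnd] using (mem_sumPullback f).mp (p.1 a₀).2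
  exact ⟨⟨_, hker⟩, Subtype.ext (funext fun a =>
    Subtype.ext (Prod.ext (hfst a₀ a) (hsnd a).symm))⟩

end sumPullback

namespace Module

variable (R : Type*) [Ring R]

theorem exists_injective_into_injective (A : Type v) [AddCommGroup A] [Module R A]
    [Small.{v} R] :
    ∃ (E : Type v) (_ : AddCommGroup E) (_ : Module R E),
      Module.Injective R E ∧ ∃ i : A →ₗ[R] E, Function.Injective i := by
  let E := CategoryTheory.Injective.under (ModuleCat.of R A)
  have : CategoryTheory.Injective E := CategoryTheory.Injective.injective_under _
  exact ⟨E, inferInstance, inferInstance, injective_module_of_injective_object R E,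
    (CategoryTheory.Injective.ι (ModuleCat.of R A)).hom,
    (ModuleCat.mono_iff_injective _).mp inferInstance⟩

theorem exists_injective_copresentation (A : Type v) [AddCommGroup A] [Module R A]
    [Small.{v} R] :
    ∃ (E E' : Type v) (_ : AddCommGroup E) (_ : Module R E) (_ : AddCommGroup E')
      (_ : Module R E'), Module.Injective R E ∧ Module.Injective R E' ∧
      ∃ (i : A →ₗ[R] E) (f : E →ₗ[R] E'),
        Function.Injective i ∧ LinearMap.range i = LinearMap.ker f := by
  obtain ⟨E, _, _, hE, i, hi⟩ := exists_injective_into_injective R A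
  obtain ⟨E', _, _, hE', j, hj⟩ := exists_injective_into_injective R (E ⧸ LinearMap.range i)
  refine ⟨E, E', _, _, _, _, hE, hE', i, j ∘ₗ (LinearMap.range i).mkQ, hi, ?_⟩
  rw [LinearMap.ker_comp, LinearMap.ker_eq_bot.mpr hj, Submodule.comap_bot, Submodule.ker_mkQ]

end Module

open Omega1 in
/-- Over a left Noetherian ring, every left module is the inverse limit of an
`ω₁`-indexed inverse system of injective modules with surjective transition maps. -/
theorem module_eq_invLim_surjective_of_injectives (R : Type) [Ring R] [IsNoetherianRing R]
    (A : Type) [AddCommGroup A] [Module R A] :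
    ∃ (P : Omega1 → Type) (_ : ∀ a, AddCommGroup (P a)) (_ : ∀ a, Module R (P a)),
      ∃ φ : ∀ a b : Omega1, a ≤ b → (P b →ₗ[R] P a),
        (∀ a, φ a a le_rfl = LinearMap.id) ∧
        (∀ (a b c : Omega1) (hab : a ≤ b) (hbc : b ≤ c),
          (φ a b hab).comp (φ b c hbc) = φ a c (hab.trans hbc)) ∧
        (∀ a, Module.Injective R (P a)) ∧
        (∀ (a b : Omega1) (h : a ≤ b), Function.Surjective (φ a b h)) ∧
        Nonempty (A ≃ₗ[R] ↥(invLim P φ)) := by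
  obtain ⟨E, E', _, _, _, _, _, _, i, f, hi, hexact⟩ :=
    Module.exists_injective_copresentation R A
  obtain ⟨e⟩ := sumPullback.nonempty_ker_equiv_invLim f (ρ := restrict)
    fun n hn => finsupp_eq_zero_of_compatible not_exists_thread n hn
  exact ⟨fun a => sumPullback f (CoinfEmbBelow a), fun _ => inferInstance, fun _ => inferInstance,
    fun _ _ h => sumPullback.map f (restrict h), fun _ => sumPullback.map_id f,
    fun _ _ _ _ _ => (sumPullback.map_comp f _ _).symm, fun _ => sumPullback.injective f _,
    fun _ _ h => sumPullback.map_surjective f (restrict_surjective h),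
    ⟨(LinearEquiv.ofInjective i hi).trans ((LinearEquiv.ofEq _ _ hexact).trans e)⟩⟩
end

section
/- Suppose $(S_\alpha, f_{\alpha\beta})_{\alpha\le\beta<\omega_1}$ is an inverse system of nonempty sets with surjective transition maps whose inverse limit is empty. Let $N$ be a nonzero left module over a ring $R$. For each $\alpha$, form the direct sum $\bigoplus_{S_\alpha} N$, with transition maps $\varphi_{\alpha\beta}$ sending $(x_j)_{j\in S_\beta}$ to $(y_i)_{i\in S_\alpha}$ where $y_i = \sum_{f_{\alpha\beta}(j)=i} x_j$. Then each $\varphi_{\alpha\beta}$ is surjective, but the inverse limit of this system of $R$-modules is the zero module. -/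
universe u v

/-! A nonzero compatible family `x` has supports whose sizes `|supp x_α|` form
a monotone `ℕ`-valued function on `ω₁`; since `ω₁` has uncountable cofinality, it is constant
from some `α₁` on.  Beyond `α₁` the transition maps then send `supp x_β` onto `supp x_α`, so the
supports form an inverse system of nonempty finite sets, which has a thread by König's lemma.
That thread extends to a thread of `(S_α)`, contradicting the emptiness of its limit. -/

open Finset

theorem Omega1.bddAbove_range_s3 (g : ℕ → Omega1) : BddAbove (Set.range g) := by
  have h : ⨆ k, (g k).1 < (Cardinal.aleph 1).ord := by
    simpa using Ordinal.iSup_lt_omega_one fun k => by simpa using (g k).2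
  refine ⟨⟨_, h⟩, ?_⟩
  rintro _ ⟨k, rfl⟩
  exact le_ciSup Ordinal.bddAbove_of_small k

theorem Monotone.exists_forall_ge_eq {ι : Type*} [Preorder ι] [Nonempty ι]
    (hbdd : ∀ g : ℕ → ι, BddAbove (Set.range g)) {n : ι → ℕ} (hn : Monotone n) :
    ∃ a₁, ∀ a, a₁ ≤ a → n a = n a₁ := by
  classical
  -- `g k` is an index where `n` reaches `k`, if any; an upper bound of all `g k` is where `n` peaks.
  let g : ℕ → ι := fun k => if h : ∃ a, k ≤ n a then h.choose else Classical.arbitrary ι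
  obtain ⟨b, hb⟩ := hbdd g
  refine ⟨b, fun a hba => le_antisymm ?_ (hn hba)⟩
  have hex : ∃ a', n a ≤ n a' := ⟨a, le_rfl⟩
  calc n a ≤ n (g (n a)) := by simpa only [g, dif_pos hex] using hex.choose_spec
    _ ≤ n b := hn (hb ⟨n a, rfl⟩)

namespace Finsupp

variable {α β M : Type*} [AddCommMonoid M]

theorem card_support_mapDomain_le (f : α → β) (v : α →₀ M) :
    #(mapDomain f v).support ≤ #v.support := by
  classical
  exact (card_le_card mapDomain_support).trans card_image_le

theorem mapsTo_support_mapDomain_of_card_le {f : α → β} {v : α →₀ M}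
    (hcard : #v.support ≤ #(mapDomain f v).support) :
    Set.MapsTo f v.support (mapDomain f v).support := by
  classical
  have himage : (mapDomain f v).support = v.support.image f :=
    eq_of_subset_of_card_le mapDomain_support (card_image_le.trans hcard)
  intro t ht
  rw [Finset.mem_coe, himage]
  exact mem_image_of_mem f ht

end Finsupp

section InverseSystem

variable {ι : Type*} {S : ι → Type*}

open CategoryTheory in
/-- König's lemma. -/
theorem exists_thread_of_finite [Preorder ι] [IsDirectedOrder ι] [∀ a, Finite (S a)]
    [∀ a, Nonempty (S a)] (f : ∀ a b : ι, a ≤ b → S b → S a)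
    (hid : ∀ a (x : S a), f a a le_rfl x = x)
    (hcomp : ∀ (a b c : ι) (hab : a ≤ b) (hbc : b ≤ c) (x : S c),
      f a b hab (f b c hbc x) = f a c (hab.trans hbc) x) :
    ∃ y : ∀ a, S a, ∀ (a b : ι) (h : a ≤ b), f a b h (y b) = y a := by
  let F : ιᵒᵖ ⥤ Type _ :=
    { obj := fun a => S a.unop
      map := fun h => TypeCat.ofHom (f _ _ (leOfHom h.unop))
      map_id := fun a => by ext x; exact hid _ x
      map_comp := fun h h' => by ext x; exact (hcomp _ _ _ (leOfHom h'.unop) (leOfHom h.unop) x).symm }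
  obtain ⟨y, hy⟩ := nonempty_sections_of_finite_inverse_system F
  exact ⟨fun a => y (.op a), fun a b h => hy (homOfLE h).op⟩

theorem exists_thread_of_finset [LinearOrder ι] (f : ∀ a b : ι, a ≤ b → S b → S a) (a₁ : ι)
    (s : ∀ a, Finset (S a))
    (hs : ∀ a, a₁ ≤ a → (s a).Nonempty)
    (hmaps : ∀ a b (h : a ≤ b), a₁ ≤ a → Set.MapsTo (f a b h) (s b) (s a))
    (hid : ∀ a (x : S a), f a a le_rfl x = x)
    (hcomp : ∀ (a b c : ι) (hab : a ≤ b) (hbc : b ≤ c) (x : S c),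
      f a b hab (f b c hbc x) = f a c (hab.trans hbc) x) :
    ∃ y : ∀ a, S a, ∀ (a b : ι) (h : a ≤ b), f a b h (y b) = y a := by
  let I := {a : ι // a₁ ≤ a}
  have : ∀ a : I, Nonempty (s a.1) := fun a => (hs a.1 a.2).to_subtype
  obtain ⟨y, hy⟩ := exists_thread_of_finite (S := fun a : I => s a.1)
    (fun a b h t => ⟨f a.1 b.1 h t.1, hmaps a.1 b.1 h a.2 t.2⟩)
    (fun a t => Subtype.ext (hid a.1 t.1))
    (fun a b c hab hbc t => Subtype.ext (hcomp a.1 b.1 c.1 hab hbc t.1))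
  let lift : ι → I := fun a => ⟨max a a₁, le_max_right _ _⟩
  refine ⟨fun a => f a _ (le_max_left a a₁) (y (lift a)).1, fun a b h => ?_⟩
  have hlift : lift a ≤ lift b := max_le_max h le_rfl
  show _ = f a _ _ (y (lift a)).1
  rw [hcomp, ← congrArg Subtype.val (hy _ _ hlift), hcomp]

end InverseSystem

theorem exists_thread_of_mem_invLim_finsupp {R N : Type u} [Ring R] [AddCommGroup N]
    [Module R N] {ι : Type v} [LinearOrder ι] (hbdd : ∀ g : ℕ → ι, BddAbove (Set.range g))
    {S : ι → Type u} (f : ∀ a b : ι, a ≤ b → S b → S a)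
    (hid : ∀ a (x : S a), f a a le_rfl x = x)
    (hcomp : ∀ (a b c : ι) (hab : a ≤ b) (hbc : b ≤ c) (x : S c),
      f a b hab (f b c hbc x) = f a c (hab.trans hbc) x)
    {x : ∀ a, S a →₀ N} (hx : x ∈ invLim _ fun a b h => Finsupp.lmapDomain N R (f a b h))
    (hx0 : x ≠ 0) :
    ∃ y : ∀ a, S a, ∀ (a b : ι) (h : a ≤ b), f a b h (y b) = y a := by
  have hc : ∀ a b h, Finsupp.mapDomain (f a b h) (x b) = x a := hx
  obtain ⟨a₀, ha₀⟩ : ∃ a, x a ≠ 0 := Function.ne_iff.mp hx0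
  have : Nonempty ι := ⟨a₀⟩
  have hmono : Monotone fun a => #(x a).support := fun a b h => by
    simpa only [hc a b h] using Finsupp.card_support_mapDomain_le (f a b h) (x b)
  obtain ⟨a₁, ha₁⟩ := hmono.exists_forall_ge_eq hbdd
  refine exists_thread_of_finset f (max a₀ a₁) (fun a => (x a).support) (fun a ha => ?_)
    (fun a b h ha => ?_) hid hcomp
  · rw [Finsupp.support_nonempty_iff]
    intro hxa
    exact ha₀ (by rw [← hc a₀ a (le_of_max_le_left ha), hxa, Finsupp.mapDomain_zero])
  · have hcard : #(x b).support ≤ #(x a).support := by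
      rw [ha₁ a (le_of_max_le_right ha), ha₁ b (le_of_max_le_right (ha.trans h))]
    rw [← hc a b h] at hcard ⊢
    exact Finsupp.mapsTo_support_mapDomain_of_card_le hcard

theorem invLim_finsupp_eq_bot_general (R : Type) [Ring R] (N : Type) [AddCommGroup N] [Module R N]
    (S : Omega1 → Type) (f : ∀ a b : Omega1, a ≤ b → S b → S a)
    (hid : ∀ (a : Omega1) (x : S a), f a a le_rfl x = x)
    (hcomp : ∀ (a b c : Omega1) (hab : a ≤ b) (hbc : b ≤ c) (x : S c),
      f a b hab (f b c hbc x) = f a c (hab.trans hbc) x)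
    (hsurj : ∀ (a b : Omega1) (h : a ≤ b), Function.Surjective (f a b h))
    (hempty : IsEmpty {x : ∀ a, S a // ∀ (a b : Omega1) (h : a ≤ b), f a b h (x b) = x a}) :
    (∀ (a b : Omega1) (h : a ≤ b),
        Function.Surjective (Finsupp.lmapDomain N R (f a b h) : (S b →₀ N) →ₗ[R] (S a →₀ N))) ∧
    invLim (fun a => S a →₀ N) (fun a b h => Finsupp.lmapDomain N R (f a b h)) = ⊥ := by
  refine ⟨fun a b h => Finsupp.mapDomain_surjective (hsurj a b h), ?_⟩
  refine (Submodule.eq_bot_iff _).mpr fun x hx => by_contra fun hx0 => ?_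
  obtain ⟨y, hy⟩ := exists_thread_of_mem_invLim_finsupp Omega1.bddAbove_range_s3 f hid hcomp hx hx0
  exact hempty.false ⟨y, hy⟩

/-- Given an `ω₁`-indexed inverse system of nonempty sets with surjective transition maps
and empty inverse limit, and a nonzero module `N`, the associated inverse system of
direct sums `⊕_{S_α} N` (with transition maps summing over fibers) has surjective
transition maps but zero inverse limit. -/
theorem invLim_finsupp_eq_bot (R : Type) [Ring R] (N : Type) [AddCommGroup N] [Module R N]
    [Nontrivial N]
    (S : Omega1 → Type) (f : ∀ a b : Omega1, a ≤ b → S b → S a)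
    (hne : ∀ a, Nonempty (S a))
    (hid : ∀ (a : Omega1) (x : S a), f a a le_rfl x = x)
    (hcomp : ∀ (a b c : Omega1) (hab : a ≤ b) (hbc : b ≤ c) (x : S c),
      f a b hab (f b c hbc x) = f a c (hab.trans hbc) x)
    (hsurj : ∀ (a b : Omega1) (h : a ≤ b), Function.Surjective (f a b h))
    (hempty : IsEmpty {x : ∀ a, S a // ∀ (a b : Omega1) (h : a ≤ b), f a b h (x b) = x a}) :
    (∀ (a b : Omega1) (h : a ≤ b),
        Function.Surjective (Finsupp.lmapDomain N R (f a b h) : (S b →₀ N) →ₗ[R] (S a →₀ N))) ∧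
    invLim (fun a => S a →₀ N) (fun a b h => Finsupp.lmapDomain N R (f a b h)) = ⊥ :=
  invLim_finsupp_eq_bot_general R N S f hid hcomp hsurj hempty
end

section
/- Let $R$ be a ring, $M$ the inverse limit of a countable directed system of injective left $R$-modules $M_\alpha$ with surjective transition maps, and $N$ the direct limit of a countable directed system of projective left $R$-modules $N_\gamma$ with injective transition maps. Then any homomorphism $f: N_\gamma \to M_\alpha$ factors as $N_\gamma \to N \to M \to M_\alpha$, where the first and last maps are the canonical maps into the direct limit and out of the inverse limit, and the middle map is some module homomorphism $N \to M$. -/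
universe u v

/-!
Restrict both systems to cofinal chains `c` in `ι` and `d` in `J` starting at `α` and `γ`, and
build maps `F n : N (d n) → M (c n)` with `F 0 = f`, each compatible with the previous one: lift
`F n` along the surjection `M (c (n+1)) → M (c n)` using that `N (d n)` is projective, then extend
the lift along the injection `N (d n) → N (d (n+1))` using that `M (c (n+1))` is injective.
Routing through any stage `m` with `j ≤ d m` and `i ≤ c m` then gives maps `N j → M i`,
independent of `m`, compatible with both systems, hence a map from the direct limit to the
inverse limit.
-/

theorem exists_monotone_cofinal_seq {ι : Type*} [Preorder ι] [IsDirected ι (· ≤ ·)]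
    [Countable ι] (a : ι) : ∃ c : ℕ → ι, Monotone c ∧ c 0 = a ∧ ∀ i, ∃ n, i ≤ c n := by
  have : Nonempty ι := ⟨a⟩
  obtain ⟨u, hu⟩ := exists_surjective_nat ι
  choose ub le_ub_left le_ub_right using fun x y : ι => exists_ge_ge x y
  refine ⟨fun n => Nat.rec a (fun n cn => ub cn (u n)) n,
    monotone_nat_of_le_succ fun n => le_ub_left _ _, rfl, fun i => ?_⟩
  obtain ⟨n, rfl⟩ := hu i
  exact ⟨n + 1, le_ub_right _ _⟩

theorem Module.exists_lift_extend {R : Type*} [Ring R] {N N' M : Type*} {M' : Type v}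
    [AddCommGroup N] [Module R N] [AddCommGroup N'] [Module R N']
    [AddCommGroup M] [Module R M] [AddCommGroup M'] [Module R M'] [Small.{v} R]
    [Module.Projective R N] [Module.Injective R M']
    (i : N →ₗ[R] N') (hi : Function.Injective i) (p : M' →ₗ[R] M) (hp : Function.Surjective p)
    (f : N →ₗ[R] M) : ∃ f' : N' →ₗ[R] M', p ∘ₗ f' ∘ₗ i = f := by
  obtain ⟨l, rfl⟩ := Module.projective_lifting_property p f hp
  obtain ⟨f', rfl⟩ := Module.Injective.extension_property R M' N N' i hi l
  exact ⟨f', rfl⟩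

namespace invLim

variable {R : Type u} [Ring R] {ι : Type v} [Preorder ι] {P : ι → Type u}
  [∀ i, AddCommGroup (P i)] [∀ i, Module R (P i)] {φ : ∀ i j : ι, i ≤ j → (P j →ₗ[R] P i)}
  {X : Type*} [AddCommGroup X] [Module R X]

def lift (g : ∀ i, X →ₗ[R] P i) (hg : ∀ i j (h : i ≤ j), φ i j h ∘ₗ g j = g i) :
    X →ₗ[R] invLim P φ :=
  LinearMap.codRestrict _ (LinearMap.pi g) fun x i j h => LinearMap.congr_fun (hg i j h) x

end invLim

section Tower

variable {R : Type u} [Ring R]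
  {ι : Type*} [Preorder ι] {M : ι → Type u} [∀ i, AddCommGroup (M i)] [∀ i, Module R (M i)]
  {φ : ∀ i j : ι, i ≤ j → (M j →ₗ[R] M i)}
  {J : Type*} [Preorder J] {N : J → Type*} [∀ j, AddCommGroup (N j)] [∀ j, Module R (N j)]
  {ψ : ∀ i j : J, i ≤ j → (N i →ₗ[R] N j)}
  {c : ℕ → ι} {d : ℕ → J} (hc : Monotone c) (hd : Monotone d)

theorem exists_seq_compatible
    (hMinj : ∀ i, Module.Injective R (M i))
    (hφsurj : ∀ (i j : ι) (h : i ≤ j), Function.Surjective (φ i j h))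
    (hNproj : ∀ j, Module.Projective R (N j))
    (hψinj : ∀ (i j : J) (h : i ≤ j), Function.Injective (ψ i j h))
    (f : N (d 0) →ₗ[R] M (c 0)) :
    ∃ F : ∀ n, N (d n) →ₗ[R] M (c n), F 0 = f ∧
      ∀ n, φ _ _ (hc n.le_succ) ∘ₗ F (n + 1) ∘ₗ ψ _ _ (hd n.le_succ) = F n := by
  choose next hnext using fun n (Fn : N (d n) →ₗ[R] M (c n)) =>
    Module.exists_lift_extend _ (hψinj _ _ (hd n.le_succ)) _ (hφsurj _ _ (hc n.le_succ)) Fn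
  exact ⟨fun n => Nat.rec f next n, rfl, fun n => hnext n _⟩

theorem seq_compatible_of_lt
    (hφcomp : ∀ (i j k : ι) (hij : i ≤ j) (hjk : j ≤ k),
      (φ i j hij).comp (φ j k hjk) = φ i k (hij.trans hjk))
    [DirectedSystem N (fun i j h => ψ i j h)]
    (F : ∀ n, N (d n) →ₗ[R] M (c n))
    (hF : ∀ n, φ _ _ (hc n.le_succ) ∘ₗ F (n + 1) ∘ₗ ψ _ _ (hd n.le_succ) = F n)
    {n m : ℕ} (hnm : n < m) : φ _ _ (hc hnm.le) ∘ₗ F m ∘ₗ ψ _ _ (hd hnm.le) = F n := by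
  induction m, hnm using Nat.le_induction with
  | base => exact hF n
  | succ m hnm ih =>
    have hnm : n < m := hnm
    ext y
    rw [← ih, LinearMap.comp_apply, LinearMap.comp_apply,
      ← Module.DirectedSystem.map_map ψ (hd hnm.le) (hd m.le_succ),
      ← hφcomp _ _ _ (hc hnm.le) (hc m.le_succ)]
    exact congr_arg (φ _ _ _) (LinearMap.congr_fun (hF m) _)

variable (φ ψ) in
def throughStage (F : ∀ n, N (d n) →ₗ[R] M (c n)) {j : J} {i : ι} (m : ℕ) (hj : j ≤ d m)
    (hi : i ≤ c m) : N j →ₗ[R] M i :=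
  φ i (c m) hi ∘ₗ F m ∘ₗ ψ j (d m) hj

theorem comp_throughStage
    (hφcomp : ∀ (i j k : ι) (hij : i ≤ j) (hjk : j ≤ k),
      (φ i j hij).comp (φ j k hjk) = φ i k (hij.trans hjk))
    (F : ∀ n, N (d n) →ₗ[R] M (c n)) {j : J} {i i' : ι} {m : ℕ} (h : i ≤ i') (hj : j ≤ d m)
    (hi' : i' ≤ c m) :
    φ i i' h ∘ₗ throughStage φ ψ F m hj hi' = throughStage φ ψ F m hj (h.trans hi') := by
  rw [throughStage, ← LinearMap.comp_assoc, hφcomp, throughStage]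

theorem throughStage_comp [DirectedSystem N (fun i j h => ψ i j h)]
    (F : ∀ n, N (d n) →ₗ[R] M (c n)) {j j' : J} {i : ι} {m : ℕ} (h : j ≤ j') (hj' : j' ≤ d m)
    (hi : i ≤ c m) :
    throughStage φ ψ F m hj' hi ∘ₗ ψ j j' h = throughStage φ ψ F m (h.trans hj') hi := by
  ext y
  exact congr_arg (φ i (c m) hi ∘ₗ F m) (Module.DirectedSystem.map_map ψ h hj' y)

theorem throughStage_congr
    (hφcomp : ∀ (i j k : ι) (hij : i ≤ j) (hjk : j ≤ k),
      (φ i j hij).comp (φ j k hjk) = φ i k (hij.trans hjk))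
    [DirectedSystem N (fun i j h => ψ i j h)]
    (F : ∀ n, N (d n) →ₗ[R] M (c n))
    (hF : ∀ n m (h : n < m), φ _ _ (hc h.le) ∘ₗ F m ∘ₗ ψ _ _ (hd h.le) = F n)
    {j : J} {i : ι} {m m' : ℕ} (hj : j ≤ d m) (hi : i ≤ c m) (hj' : j ≤ d m') (hi' : i ≤ c m') :
    throughStage φ ψ F m hj hi = throughStage φ ψ F m' hj' hi' := by
  wlog hmm' : m ≤ m' generalizing m m'
  · exact (this hj' hi' hj hi (le_of_not_ge hmm')).symm
  rcases hmm'.eq_or_lt with rfl | hlt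
  · rfl
  calc throughStage φ ψ F m hj hi
      = φ i (c m) hi ∘ₗ throughStage φ ψ F m' (hd hlt.le) (hc hlt.le) ∘ₗ ψ j (d m) hj := by
        rw [throughStage, throughStage, hF m m' hlt]
    _ = throughStage φ ψ F m' hj' hi' := by rw [throughStage_comp, comp_throughStage hφcomp]

theorem exists_lift_of_cofinal
    (hφcomp : ∀ (i j k : ι) (hij : i ≤ j) (hjk : j ≤ k),
      (φ i j hij).comp (φ j k hjk) = φ i k (hij.trans hjk))
    [DecidableEq J] [DirectedSystem N (fun i j h => ψ i j h)]
    (hc_cofinal : ∀ i, ∃ n, i ≤ c n) (hd_cofinal : ∀ j, ∃ n, j ≤ d n)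
    (F : ∀ n, N (d n) →ₗ[R] M (c n))
    (hF : ∀ n m (h : n < m), φ _ _ (hc h.le) ∘ₗ F m ∘ₗ ψ _ _ (hd h.le) = F n) :
    ∃ g : Module.DirectLimit N ψ →ₗ[R] invLim M φ, ∀ n,
      ((LinearMap.proj (c n)).comp (invLim M φ).subtype).comp
        (g.comp (Module.DirectLimit.of R J N ψ (d n))) = F n := by
  choose kc hkc using hc_cofinal
  choose kd hkd using hd_cofinal
  let H (j : J) (i : ι) : N j →ₗ[R] M i :=
    throughStage φ ψ F (max (kd j) (kc i)) ((hkd j).trans (hd (le_max_left _ _)))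
      ((hkc i).trans (hc (le_max_right _ _)))
  have hH_φ (j : J) (i i' : ι) (h : i ≤ i') : φ i i' h ∘ₗ H j i' = H j i := by
    rw [comp_throughStage hφcomp]
    exact throughStage_congr hc hd hφcomp F hF _ _ _ _
  have hH_ψ (j j' : J) (h : j ≤ j') (i : ι) : H j' i ∘ₗ ψ j j' h = H j i := by
    rw [throughStage_comp]
    exact throughStage_congr hc hd hφcomp F hF _ _ _ _
  refine ⟨Module.DirectLimit.lift R J N ψ (fun j => invLim.lift (H j) (hH_φ j))
    fun j j' h y => Subtype.ext <| funext fun i => LinearMap.congr_fun (hH_ψ j j' h i) y,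
    fun n => ?_⟩
  ext y
  simp only [LinearMap.comp_apply, Module.DirectLimit.lift_of]
  exact (LinearMap.congr_fun (throughStage_congr hc hd hφcomp F hF _ _
    (hd n.le_succ) (hc n.le_succ)) y).trans (LinearMap.congr_fun (hF n _ n.lt_succ_self) y)

end Tower

theorem factor_through_limits_general (R : Type) [Ring R]
    (ι : Type) [Preorder ι] [IsDirected ι (· ≤ ·)] [Countable ι]
    (M : ι → Type) [∀ i, AddCommGroup (M i)] [∀ i, Module R (M i)]
    (φ : ∀ i j : ι, i ≤ j → (M j →ₗ[R] M i))
    (hφcomp : ∀ (i j k : ι) (hij : i ≤ j) (hjk : j ≤ k),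
      (φ i j hij).comp (φ j k hjk) = φ i k (hij.trans hjk))
    (hMinj : ∀ i, Module.Injective R (M i))
    (hφsurj : ∀ (i j : ι) (h : i ≤ j), Function.Surjective (φ i j h))
    (J : Type) [Preorder J] [IsDirected J (· ≤ ·)] [Countable J] [DecidableEq J]
    (N : J → Type) [∀ j, AddCommGroup (N j)] [∀ j, Module R (N j)]
    (ψ : ∀ i j : J, i ≤ j → (N i →ₗ[R] N j)) [DirectedSystem N (fun i j h => ψ i j h)]
    (hNproj : ∀ j, Module.Projective R (N j))
    (hψinj : ∀ (i j : J) (h : i ≤ j), Function.Injective (ψ i j h))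
    (γ : J) (α : ι) (f : N γ →ₗ[R] M α) :
    ∃ g : Module.DirectLimit N ψ →ₗ[R] ↥(invLim M φ),
      ((LinearMap.proj α).comp (invLim M φ).subtype).comp
          (g.comp (Module.DirectLimit.of R J N ψ γ)) = f := by
  obtain ⟨c, hc, rfl, hc_cofinal⟩ := exists_monotone_cofinal_seq α
  obtain ⟨d, hd, rfl, hd_cofinal⟩ := exists_monotone_cofinal_seq γ
  obtain ⟨F, rfl, hF⟩ := exists_seq_compatible hc hd hMinj hφsurj hNproj hψinj f
  obtain ⟨g, hg⟩ := exists_lift_of_cofinal hc hd hφcomp hc_cofinal hd_cofinal F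
    fun _ _ => seq_compatible_of_lt hc hd hφcomp F hF
  exact ⟨g, hg 0⟩

/-- Factorization lemma: with `M` a countable inverse limit of injectives along
surjections and `N` a countable direct limit of projectives along injections, any
homomorphism `N_γ → M_α` factors through the canonical maps `N_γ → N` and `M → M_α`. -/
theorem factor_through_limits (R : Type) [Ring R]
    (ι : Type) [Preorder ι] [IsDirected ι (· ≤ ·)] [Countable ι] [Nonempty ι]
    (M : ι → Type) [∀ i, AddCommGroup (M i)] [∀ i, Module R (M i)]
    (φ : ∀ i j : ι, i ≤ j → (M j →ₗ[R] M i))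
    (hφid : ∀ i, φ i i le_rfl = LinearMap.id)
    (hφcomp : ∀ (i j k : ι) (hij : i ≤ j) (hjk : j ≤ k),
      (φ i j hij).comp (φ j k hjk) = φ i k (hij.trans hjk))
    (hMinj : ∀ i, Module.Injective R (M i))
    (hφsurj : ∀ (i j : ι) (h : i ≤ j), Function.Surjective (φ i j h))
    (J : Type) [Preorder J] [IsDirected J (· ≤ ·)] [Countable J] [Nonempty J] [DecidableEq J]
    (N : J → Type) [∀ j, AddCommGroup (N j)] [∀ j, Module R (N j)]
    (ψ : ∀ i j : J, i ≤ j → (N i →ₗ[R] N j)) [DirectedSystem N (fun i j h => ψ i j h)]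
    (hNproj : ∀ j, Module.Projective R (N j))
    (hψinj : ∀ (i j : J) (h : i ≤ j), Function.Injective (ψ i j h))
    (γ : J) (α : ι) (f : N γ →ₗ[R] M α) :
    ∃ g : Module.DirectLimit N ψ →ₗ[R] ↥(invLim M φ),
      ((LinearMap.proj α).comp (invLim M φ).subtype).comp
          (g.comp (Module.DirectLimit.of R J N ψ γ)) = f :=
  factor_through_limits_general R ι M φ hφcomp hMinj hφsurj J N ψ hNproj hψinj γ α f
end

section
/- Let $M$ be the inverse limit of a countable directed system of injective (equivalently, divisible) abelian groups $M_\alpha$ with surjective transition maps, and let $M_{\mathrm{div}}$ be the largest divisible subgroup of $M$ (the sum of the images of all group homomorphisms $\mathbb{Q} \to M$). Then for each index $\alpha$, the composite $M_{\mathrm{div}} \hookrightarrow M \to M_\alpha$ is surjective. -/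
universe u v

/-!
A homomorphism `ℚ → G` amounts to a sequence `c` with `(n + 1) • c (n + 1) = c n` (think
`c n = c 0 / n!`), so it suffices to find such a chain in the inverse limit whose `0`-th term
projects to `y`. Along a monotone cofinal sequence `s` of indices, lift chains one level at a
time: `col (k + 1)` is a chain in `M (s (k + 1))` through a lift of `col k k`, which exists since
the groups are divisible. The transition map carries `col (k + 1)` to `col k` only on the terms
`n ≤ k` (a chain is determined below any of its terms), but this makes `k ↦ col k n` eventually
compatible for each fixed `n`, which is enough to define the `n`-th term of a chain in the
inverse limit.
-/

open Filter

def IsDivChain {G : Type*} [AddCommGroup G] (c : ℕ → G) : Prop :=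
  ∀ n : ℕ, ((n : ℤ) + 1) • c (n + 1) = c n

theorem Rat.exists_intCast_eq_mul_factorial (q : ℚ) {N : ℕ} (h : q.den ≤ N) :
    ∃ b : ℤ, (b : ℚ) = q * N.factorial := by
  obtain ⟨t, ht⟩ := Nat.dvd_factorial q.pos h
  exact ⟨q.num * t, by rw [ht]; push_cast; rw [← mul_assoc, Rat.mul_den_eq_num]⟩

namespace IsDivChain

variable {G H : Type*} [AddCommGroup G] [AddCommGroup H] {c d : ℕ → G}

theorem smul (hc : IsDivChain c) (m : ℤ) : IsDivChain (m • c) := fun n => by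
  simp only [Pi.smul_apply, smul_comm _ m, hc n]

theorem map (hc : IsDivChain c) (f : G →+ H) : IsDivChain (f ∘ c) := fun n => by
  simp only [Function.comp_apply, ← map_zsmul, hc n]

theorem eq_ascFactorial_smul (hc : IsDivChain c) (n k : ℕ) :
    c n = ((n + 1).ascFactorial k : ℤ) • c (n + k) := by
  induction k with
  | zero => simp
  | succ k ih =>
    rw [ih, ← hc (n + k), smul_smul, Nat.ascFactorial_succ, ← add_assoc]
    push_cast
    ring_nf

theorem eq_of_le_of_eq (hc : IsDivChain c) (hd : IsDivChain d) {n k : ℕ} (hnk : n ≤ k)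
    (h : c k = d k) : c n = d n := by
  obtain ⟨j, rfl⟩ := Nat.exists_eq_add_of_le hnk
  rw [hc.eq_ascFactorial_smul n j, hd.eq_ascFactorial_smul n j, h]

theorem zsmul_eq_zsmul (hc : IsDivChain c) {q : ℚ} {b b' : ℤ} {n m : ℕ}
    (hb : (b : ℚ) = q * n.factorial) (hb' : (b' : ℚ) = q * m.factorial) :
    b • c n = b' • c m := by
  wlog hnm : n ≤ m generalizing n m b b'
  · exact (this hb' hb (le_of_not_ge hnm)).symm
  obtain ⟨k, rfl⟩ := Nat.exists_eq_add_of_le hnm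
  have hA : (n.factorial : ℚ) * (n + 1).ascFactorial k = (n + k).factorial := by
    exact_mod_cast Nat.factorial_mul_ascFactorial n k
  have hbb' : b * (n + 1).ascFactorial k = b' := by
    exact_mod_cast (show (b : ℚ) * (n + 1).ascFactorial k = b' by rw [hb, hb', ← hA, mul_assoc])
  rw [hc.eq_ascFactorial_smul n k, smul_smul, hbb']

theorem exists_zero_eq (hG : ∀ n : ℤ, n ≠ 0 → Function.Surjective fun y : G => n • y) (g : G) :
    ∃ c : ℕ → G, IsDivChain c ∧ c 0 = g := by
  choose div hdiv using fun (n : ℕ) (x : G) => hG ((n : ℤ) + 1) (by positivity) x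
  exact ⟨fun n => Nat.rec g (fun n x => div n x) n, fun n => hdiv n _, rfl⟩

theorem exists_eq (hG : ∀ n : ℤ, n ≠ 0 → Function.Surjective fun y : G => n • y) (k : ℕ)
    (g : G) : ∃ c : ℕ → G, IsDivChain c ∧ c k = g := by
  obtain ⟨d, hd, hd0⟩ := exists_zero_eq hG g
  -- `d k` is `g / k!`, so `k! • d` passes through `g` at `k`
  refine ⟨(k.factorial : ℤ) • d, hd.smul _, ?_⟩
  rw [Pi.smul_apply, ← hd0, hd.eq_ascFactorial_smul 0 k, Nat.one_ascFactorial, zero_add]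

noncomputable def toRatHom (hc : IsDivChain c) : ℚ →+ G :=
  AddMonoidHom.mk' (fun q => (q.exists_intCast_eq_mul_factorial le_rfl).choose • c q.den)
    fun q q' => by
      have hspec (x : ℚ) := (x.exists_intCast_eq_mul_factorial le_rfl).choose_spec
      let N := q.den + q'.den
      obtain ⟨b, hb⟩ := q.exists_intCast_eq_mul_factorial (N := N) (by omega)
      obtain ⟨b', hb'⟩ := q'.exists_intCast_eq_mul_factorial (N := N) (by omega)
      have hsum : ((b + b' : ℤ) : ℚ) = (q + q') * N.factorial := by push_cast; rw [hb, hb']; ring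
      rw [hc.zsmul_eq_zsmul (hspec _) hsum, hc.zsmul_eq_zsmul (hspec q) hb,
        hc.zsmul_eq_zsmul (hspec q') hb', add_smul]

theorem toRatHom_apply_of_eq (hc : IsDivChain c) {q : ℚ} {b : ℤ} {N : ℕ}
    (h : (b : ℚ) = q * N.factorial) : hc.toRatHom q = b • c N :=
  hc.zsmul_eq_zsmul (q.exists_intCast_eq_mul_factorial le_rfl).choose_spec h

theorem toRatHom_one (hc : IsDivChain c) : hc.toRatHom 1 = c 0 := by
  rw [hc.toRatHom_apply_of_eq (b := 1) (N := 0) (by simp), one_smul]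

theorem mem_iSup_range (hc : IsDivChain c) : c 0 ∈ ⨆ f : ℚ →+ G, f.range :=
  le_iSup (fun f : ℚ →+ G => f.range) hc.toRatHom ⟨1, hc.toRatHom_one⟩

end IsDivChain

theorem exists_isDivChain_tower {G : ℕ → Type*} [∀ k, AddCommGroup (G k)]
    (ψ : ∀ k, G (k + 1) →+ G k) (hψ : ∀ k, Function.Surjective (ψ k))
    (hG : ∀ k (n : ℤ), n ≠ 0 → Function.Surjective fun y : G k => n • y) (g : G 0) :
    ∃ col : ∀ k, ℕ → G k, (∀ k, IsDivChain (col k)) ∧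
      (∀ k n, n ≤ k → ψ k (col (k + 1) n) = col k n) ∧ col 0 0 = g := by
  have hlift (k : ℕ) (c : ℕ → G k) : ∃ d : ℕ → G (k + 1), IsDivChain d ∧ ψ k (d k) = c k := by
    obtain ⟨e, he⟩ := hψ k (c k)
    obtain ⟨d, hd, hdk⟩ := IsDivChain.exists_eq (hG (k + 1)) k e
    exact ⟨d, hd, hdk ▸ he⟩
  choose lift hlift_chain hlift_eq using hlift
  obtain ⟨c₀, hc₀, hc₀0⟩ := IsDivChain.exists_zero_eq (hG 0) g
  let col : ∀ k, ℕ → G k := fun k => Nat.rec c₀ (fun k c => lift k c) k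
  have hcol : ∀ k, IsDivChain (col k)
    | 0 => hc₀
    | k + 1 => hlift_chain k (col k)
  exact ⟨col, hcol, fun k n hnk =>
    ((hlift_chain k (col k)).map (ψ k)).eq_of_le_of_eq (hcol k) hnk (hlift_eq k (col k)), hc₀0⟩

theorem exists_monotone_tendsto_atTop_ge {ι : Type*} [Preorder ι] [IsDirectedOrder ι]
    [Countable ι] (a : ι) : ∃ s : ℕ → ι, Monotone s ∧ Tendsto s atTop atTop ∧ a ≤ s 0 := by
  have : Nonempty ι := ⟨a⟩
  obtain ⟨s, hs, hcof⟩ := exists_seq_monotone_tendsto_atTop_atTop ι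
  obtain ⟨k, hk⟩ := (hcof.eventually_ge_atTop a).exists
  exact ⟨fun n => s (n + k), fun m n h => hs (by omega), hcof.comp (tendsto_add_atTop_nat k),
    by simpa using hk⟩

section InverseLimit

variable {R : Type u} [Ring R] {ι : Type v} [Preorder ι] {P : ι → Type u}
  [∀ i, AddCommGroup (P i)] [∀ i, Module R (P i)] {φ : ∀ i j : ι, i ≤ j → (P j →ₗ[R] P i)}

theorem exists_mem_invLim_of_eventually_compatible
    (hφcomp : ∀ (i j k : ι) (hij : i ≤ j) (hjk : j ≤ k),
      (φ i j hij).comp (φ j k hjk) = φ i k (hij.trans hjk))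
    {s : ℕ → ι} (hs : Monotone s) (hcof : Tendsto s atTop atTop) (n : ℕ) (z : ∀ k, P (s k))
    (hz : ∀ k, n ≤ k → φ (s k) (s (k + 1)) (hs k.le_succ) (z (k + 1)) = z k) :
    ∃ x ∈ invLim P φ, ∀ j k (h : j ≤ s k), n ≤ k → x j = φ j (s k) h (z k) := by
  have hstable : ∀ j k l (hk : j ≤ s k) (hl : j ≤ s l), n ≤ k → k ≤ l →
      φ j (s k) hk (z k) = φ j (s l) hl (z l) := by
    intro j k l hk hl hnk hkl
    induction l, hkl using Nat.le_induction with
    | base => rfl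
    | succ l hkl ih =>
      rw [ih (hk.trans (hs hkl)), ← hz l (hnk.trans hkl), ← LinearMap.comp_apply, hφcomp]
  have hindep : ∀ j k l (hk : j ≤ s k) (hl : j ≤ s l), n ≤ k → n ≤ l →
      φ j (s k) hk (z k) = φ j (s l) hl (z l) := fun j k l hk hl hnk hnl =>
    (le_total k l).elim (hstable j k l hk hl hnk) fun hlk => (hstable j l k hl hk hnl hlk).symm
  choose K hK using fun j => ((hcof.eventually_ge_atTop j).and (eventually_ge_atTop n)).exists
  refine ⟨fun j => φ j (s (K j)) (hK j).1 (z (K j)), fun i j hij => ?_,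
    fun j k h hnk => hindep j _ k _ h (hK j).2 hnk⟩
  rw [← LinearMap.comp_apply, hφcomp]
  exact hindep i _ _ _ _ (hK j).2 (hK i).2

end InverseLimit

theorem divisible_part_surjects_general (ι : Type) [Preorder ι] [IsDirected ι (· ≤ ·)]
    [Countable ι]
    (M : ι → Type) [∀ i, AddCommGroup (M i)]
    (φ : ∀ i j : ι, i ≤ j → (M j →ₗ[ℤ] M i))
    (hφcomp : ∀ (i j k : ι) (hij : i ≤ j) (hjk : j ≤ k),
      (φ i j hij).comp (φ j k hjk) = φ i k (hij.trans hjk))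
    (hdiv : ∀ (i : ι) (n : ℤ), n ≠ 0 → Function.Surjective (fun y : M i => n • y))
    (hφsurj : ∀ (i j : ι) (h : i ≤ j), Function.Surjective (φ i j h)) :
    ∀ (a : ι) (y : M a), ∃ x : ↥(invLim M φ),
      x ∈ (⨆ f : ℚ →+ ↥(invLim M φ), f.range) ∧ (x : ∀ i, M i) a = y := by
  intro a y
  obtain ⟨s, hs, hcof, has⟩ := exists_monotone_tendsto_atTop_ge a
  obtain ⟨g, rfl⟩ := hφsurj a (s 0) has y
  obtain ⟨col, hcol, hcompat, hcol0⟩ := exists_isDivChain_tower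
    (fun k => (φ (s k) (s (k + 1)) (hs k.le_succ)).toAddMonoidHom) (fun k => hφsurj _ _ _)
    (fun k => hdiv (s k)) g
  choose x hx hxcol using fun n => exists_mem_invLim_of_eventually_compatible hφcomp hs hcof n
    (fun k => col k n) (fun k => hcompat k n)
  let xs : ℕ → invLim M φ := fun n => ⟨x n, hx n⟩
  have hxs : IsDivChain xs := fun n => Subtype.ext <| funext fun j => by
    obtain ⟨k, hjk, hnk⟩ := ((hcof.eventually_ge_atTop j).and (eventually_ge_atTop (n + 1))).exists
    change ((n : ℤ) + 1) • x (n + 1) j = x n j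
    rw [hxcol _ j k hjk hnk, hxcol n j k hjk (by omega), ← map_zsmul, hcol k n]
  refine ⟨xs 0, hxs.mem_iSup_range, ?_⟩
  change x 0 a = _
  rw [hxcol 0 a 0 has le_rfl, hcol0]

/-- If `M` is the inverse limit of a countable directed system of divisible (injective)
abelian groups with surjective transition maps, then the largest divisible subgroup of
`M` (the sum of the images of all homomorphisms `ℚ → M`) maps onto each term `M_α`. -/
theorem divisible_part_surjects (ι : Type) [Preorder ι] [IsDirected ι (· ≤ ·)]
    [Countable ι] [Nonempty ι]
    (M : ι → Type) [∀ i, AddCommGroup (M i)]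
    (φ : ∀ i j : ι, i ≤ j → (M j →ₗ[ℤ] M i))
    (hφid : ∀ i, φ i i le_rfl = LinearMap.id)
    (hφcomp : ∀ (i j k : ι) (hij : i ≤ j) (hjk : j ≤ k),
      (φ i j hij).comp (φ j k hjk) = φ i k (hij.trans hjk))
    (hdiv : ∀ (i : ι) (n : ℤ), n ≠ 0 → Function.Surjective (fun y : M i => n • y))
    (hφsurj : ∀ (i j : ι) (h : i ≤ j), Function.Surjective (φ i j h)) :
    ∀ (a : ι) (y : M a), ∃ x : ↥(invLim M φ),
      x ∈ (⨆ f : ℚ →+ ↥(invLim M φ), f.range) ∧ (x : ∀ i, M i) a = y :=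
  divisible_part_surjects_general ι M φ hφcomp hdiv hφsurj
end

section
/- If a nonzero abelian group $M$ is the inverse limit of a countable directed system of divisible abelian groups with surjective transition maps and at least one nonzero term, then $M$ contains a nonzero divisible subgroup. In particular, no nonzero finitely generated abelian group is such an inverse limit. -/
universe u v

/-! Along a cofinal chain `j 0 ≤ j 1 ≤ ⋯` the limit is a sequential one. Starting from a nonzero
coordinate `z 0` of a nonzero element, divisibility and surjectivity of the transition maps give
`z k` at level `k` with `(k + 1) • z (k + 1) ↦ z k`. Dividing these coordinatewise by factorials
yields `x m` in the limit with `(m + 1) • x (m + 1) = x m` and `x 0 ≠ 0`, so `⋃ m, ℤ ∙ x m` is a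
nonzero divisible subgroup. A finitely generated abelian group has no such subgroup: by Nakayama's
lemma for the ideal `(2)` it is killed by an odd integer, by which it is also divisible. -/

open Filter Function

def AddSubgroup.IsDivisible {A : Type*} [AddCommGroup A] (D : AddSubgroup A) : Prop :=
  ∀ n : ℤ, n ≠ 0 → ∀ x ∈ D, ∃ y ∈ D, n • y = x

section Divisible

variable {A : Type*} [AddCommGroup A]

theorem AddSubgroup.eq_bot_of_isDivisible [AddGroup.FG A] {D : AddSubgroup A}
    (hD : D.IsDivisible) : D = ⊥ := by
  have hfg : D.toIntSubmodule.FG := IsNoetherian.noetherian _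
  obtain ⟨r, hr1, hr⟩ := Submodule.exists_sub_one_mem_and_smul_eq_zero_of_fg_of_le_smul
    (Ideal.span {2}) _ hfg fun v hv => by
      obtain ⟨w, hw, rfl⟩ := hD 2 two_ne_zero v hv
      exact Submodule.smul_mem_smul (Ideal.mem_span_singleton_self 2) hw
  have hr0 : r ≠ 0 := by
    rintro rfl
    obtain ⟨c, hc⟩ := Ideal.mem_span_singleton.1 hr1
    omega
  refine (eq_bot_iff_forall _).2 fun v hv => ?_
  obtain ⟨w, hw, rfl⟩ := hD r hr0 v hv
  exact hr w hw

theorem ascFactorial_smul_eq_of_succ_smul_eq {x : ℕ → A}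
    (hx : ∀ m : ℕ, ((m : ℤ) + 1) • x (m + 1) = x m) (m r : ℕ) :
    ((m + 1).ascFactorial r : ℤ) • x (m + r) = x m := by
  induction r with
  | zero => simp
  | succ r ih =>
    rw [← ih, ← hx (m + r), smul_smul, Nat.ascFactorial_succ]
    push_cast
    ring_nf

theorem exists_isDivisible_ne_bot_of_succ_smul_eq {x : ℕ → A} (hx0 : x 0 ≠ 0)
    (hx : ∀ m : ℕ, ((m : ℤ) + 1) • x (m + 1) = x m) :
    ∃ D : AddSubgroup A, D ≠ ⊥ ∧ D.IsDivisible := by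
  have hmono : Monotone fun m => AddSubgroup.zmultiples (x m) :=
    monotone_nat_of_le_succ fun m =>
      AddSubgroup.zmultiples_le_of_mem ⟨(m : ℤ) + 1, hx m⟩
  refine ⟨⨆ m, AddSubgroup.zmultiples (x m), ?_, fun n hn v hv => ?_⟩
  · exact AddSubgroup.ne_bot_iff_exists_ne_zero.2
      ⟨⟨x 0, AddSubgroup.mem_iSup_of_mem 0 (AddSubgroup.mem_zmultiples _)⟩, by simpa using hx0⟩
  obtain ⟨m, c, rfl⟩ : ∃ m, ∃ c : ℤ, c • x m = v := by
    obtain ⟨m, hm⟩ := (AddSubgroup.mem_iSup_of_directed hmono.directed_le).1 hv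
    exact ⟨m, AddSubgroup.mem_zmultiples_iff.1 hm⟩
  obtain ⟨q, hq⟩ : n ∣ ((m + 1).ascFactorial n.natAbs : ℤ) :=
    Int.natAbs_dvd.1 <| Int.natCast_dvd_natCast.2 <|
      (Nat.dvd_factorial (Int.natAbs_pos.2 hn) le_rfl).trans (Nat.factorial_dvd_ascFactorial _ _)
  refine ⟨(c * q) • x (m + n.natAbs),
    AddSubgroup.mem_iSup_of_mem _ (AddSubgroup.zsmul_mem _ (AddSubgroup.mem_zmultiples _) _), ?_⟩
  rw [smul_smul, mul_left_comm, ← smul_smul, ← hq, ascFactorial_smul_eq_of_succ_smul_eq hx]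

end Divisible

theorem exists_monotone_cofinal_seq_ge {ι : Type*} [Preorder ι] [IsDirectedOrder ι] [Countable ι]
    (i₀ : ι) : ∃ j : ℕ → ι, Monotone j ∧ i₀ ≤ j 0 ∧ ∀ i, ∃ k, i ≤ j k := by
  have : Nonempty ι := ⟨i₀⟩
  obtain ⟨s, hmono, htend⟩ := exists_seq_monotone_tendsto_atTop_atTop ι
  obtain ⟨K, hK⟩ := (htend.eventually_ge_atTop i₀).exists
  refine ⟨fun k => s (k + K), fun k l hkl => hmono (by omega), by simpa using hK, fun i => ?_⟩
  exact (((tendsto_add_atTop_iff_nat K).2 htend).eventually_ge_atTop i).exists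

section NatIndexed

variable {R : Type u} [CommRing R] {N : ℕ → Type u} [∀ k, AddCommGroup (N k)]
  [∀ k, Module R (N k)] {f : ∀ k l : ℕ, k ≤ l → (N l →ₗ[R] N k)}

theorem exists_seq_smul_map_succ_eq (a : ℕ → R)
    (hsurj : ∀ k, Surjective fun w : N (k + 1) => a k • f k (k + 1) k.le_succ w) (z₀ : N 0) :
    ∃ z : ∀ k, N k, z 0 = z₀ ∧ ∀ k, a k • f k (k + 1) k.le_succ (z (k + 1)) = z k := by
  choose lift hlift using hsurj
  exact ⟨fun k => Nat.rec z₀ (fun k w => lift k w) k, rfl, fun k => hlift k _⟩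

variable (hid : ∀ k, f k k le_rfl = LinearMap.id)
  (hcomp : ∀ (k l m : ℕ) (hkl : k ≤ l) (hlm : l ≤ m),
    (f k l hkl).comp (f l m hlm) = f k m (hkl.trans hlm))
include hid hcomp

theorem mem_invLim_nat_iff {y : ∀ k, N k} :
    y ∈ invLim N f ↔ ∀ k, f k (k + 1) k.le_succ (y (k + 1)) = y k := by
  refine ⟨fun hy k => hy k (k + 1) _, fun hy k l hkl => ?_⟩
  induction l, hkl using Nat.le_induction with
  | base => rw [hid]; rfl
  | succ l hkl ih => rw [← hcomp k l (l + 1) hkl l.le_succ, LinearMap.comp_apply, hy, ih]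

theorem exists_invLim_seq_smul_succ_eq (a : ℕ → R)
    (hsurj : ∀ k, Surjective fun w : N (k + 1) => a k • f k (k + 1) k.le_succ w) (z₀ : N 0) :
    ∃ x : ℕ → invLim N f, (x 0 : ∀ k, N k) 0 = z₀ ∧ ∀ m, a m • x (m + 1) = x m := by
  obtain ⟨z, rfl, hz⟩ := exists_seq_smul_map_succ_eq a hsurj z₀
  -- `m + 1 + k` and `m + k + 1` are not definitionally equal, so levels are moved by hand
  have hz_congr : ∀ {k p q : ℕ} (hpq : p = q) (hp : k ≤ p) (hq : k ≤ q),
      f k p hp (z p) = f k q hq (z q) := by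
    rintro k p q rfl _ _; rfl
  -- `y m` is `z` divided by `a 0 * ⋯ * a (m - 1)`, read off at level `k` from `z (m + k)`
  let y : ℕ → ∀ k, N k := fun m k =>
    (∏ i ∈ Finset.range k, a (m + i)) • f k (m + k) (Nat.le_add_left k m) (z (m + k))
  have hy_step : ∀ m k, y m k = (∏ i ∈ Finset.range (k + 1), a (m + i)) •
      f k (m + k + 1) (by omega) (z (m + k + 1)) := by
    intro m k
    simp only [y, Finset.prod_range_succ, mul_smul]
    rw [← hz, map_smul, ← LinearMap.comp_apply, hcomp]
  have hy_mem : ∀ m, y m ∈ invLim N f := fun m => (mem_invLim_nat_iff hid hcomp).2 fun k => by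
    rw [hy_step m k]
    dsimp only [y]
    rw [map_smul, ← LinearMap.comp_apply, hcomp]
    rfl
  refine ⟨fun m => ⟨y m, hy_mem m⟩, ?_, fun m => Subtype.ext (funext fun k => ?_)⟩
  · show (1 : R) • f 0 0 le_rfl (z 0) = z 0
    rw [hid, one_smul, LinearMap.id_apply]
  · show a m • y (m + 1) k = y m k
    rw [hy_step m k, Finset.prod_range_succ', mul_comm, mul_smul]
    dsimp only [y]
    rw [hz_congr (show m + 1 + k = m + k + 1 by omega) _ (by omega)]
    simp only [add_zero, add_right_comm m 1]
    rfl

end NatIndexed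

section Cofinal

variable {R : Type u} [Ring R] {ι : Type v} [Preorder ι] {M : ι → Type u}
  [∀ i, AddCommGroup (M i)] [∀ i, Module R (M i)] {φ : ∀ i j : ι, i ≤ j → (M j →ₗ[R] M i)}
  {j : ℕ → ι}

def invLimRestrict (hj : Monotone j) :
    invLim M φ →ₗ[R] invLim (fun k => M (j k)) (fun k l h => φ (j k) (j l) (hj h)) where
  toFun x := ⟨fun k => (x : ∀ i, M i) (j k), fun k l h => x.2 (j k) (j l) (hj h)⟩
  map_add' _ _ := rfl
  map_smul' _ _ := rfl

theorem invLimRestrict_injective (hj : Monotone j) (hcof : ∀ i, ∃ k, i ≤ j k) :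
    Injective (invLimRestrict (φ := φ) hj) := by
  intro x y hxy
  refine Subtype.ext (funext fun i => ?_)
  obtain ⟨k, hk⟩ := hcof i
  rw [← x.2 i (j k) hk, ← y.2 i (j k) hk]
  exact congrArg (φ i (j k) hk) (congrFun (congrArg Subtype.val hxy) k)

theorem invLimRestrict_surjective (hφid : ∀ i, φ i i le_rfl = LinearMap.id)
    (hφcomp : ∀ (i j k : ι) (hij : i ≤ j) (hjk : j ≤ k),
      (φ i j hij).comp (φ j k hjk) = φ i k (hij.trans hjk))
    (hj : Monotone j) (hcof : ∀ i, ∃ k, i ≤ j k) :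
    Surjective (invLimRestrict (φ := φ) hj) := by
  rintro ⟨y, hy⟩
  choose c hc using hcof
  have hwd : ∀ i k (h : i ≤ j k), φ i (j k) h (y k) = φ i (j (c i)) (hc i) (y (c i)) := by
    intro i k h
    rcases le_total k (c i) with hkc | hck
    · rw [← hy k (c i) hkc, ← LinearMap.comp_apply, hφcomp]
    · rw [← hy (c i) k hck, ← LinearMap.comp_apply, hφcomp]
  refine ⟨⟨fun i => φ i (j (c i)) (hc i) (y (c i)), fun i i' h => ?_⟩, ?_⟩
  · rw [← LinearMap.comp_apply, hφcomp, hwd]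
  · refine Subtype.ext (funext fun k => ?_)
    show φ (j k) (j (c (j k))) _ (y _) = y k
    rw [← hwd (j k) k le_rfl, hφid, LinearMap.id_apply]

end Cofinal

theorem invLim_divisible_contains_divisible_general (ι : Type) [Preorder ι] [IsDirected ι (· ≤ ·)]
    [Countable ι]
    (M : ι → Type) [∀ i, AddCommGroup (M i)]
    (φ : ∀ i j : ι, i ≤ j → (M j →ₗ[ℤ] M i))
    (hφid : ∀ i, φ i i le_rfl = LinearMap.id)
    (hφcomp : ∀ (i j k : ι) (hij : i ≤ j) (hjk : j ≤ k),
      (φ i j hij).comp (φ j k hjk) = φ i k (hij.trans hjk))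
    (hdiv : ∀ (i : ι) (n : ℤ), n ≠ 0 → Function.Surjective (fun y : M i => n • y))
    (hφsurj : ∀ (i j : ι) (h : i ≤ j), Function.Surjective (φ i j h))
    (hM : Nontrivial ↥(invLim M φ)) :
    (∃ D : AddSubgroup ↥(invLim M φ), D ≠ ⊥ ∧
      ∀ (n : ℤ), n ≠ 0 → ∀ x ∈ D, ∃ y ∈ D, n • y = x) ∧
    ¬ AddGroup.FG ↥(invLim M φ) := by
  obtain ⟨g, hg⟩ := exists_ne (0 : invLim M φ)
  obtain ⟨i₀, hi₀⟩ : ∃ i, (g : ∀ i, M i) i ≠ 0 := by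
    by_contra! h
    exact hg (Subtype.ext (funext h))
  obtain ⟨j, hj, hi₀j, hcof⟩ := exists_monotone_cofinal_seq_ge i₀
  let e := LinearEquiv.ofBijective (invLimRestrict hj)
    ⟨invLimRestrict_injective hj hcof, invLimRestrict_surjective hφid hφcomp hj hcof⟩
  have hsucc : ∀ k, Surjective fun w : M (j (k + 1)) =>
      ((k : ℤ) + 1) • φ (j k) (j (k + 1)) (hj k.le_succ) w := fun k w => by
    obtain ⟨v, rfl⟩ := hdiv (j k) ((k : ℤ) + 1) (by omega) w
    obtain ⟨u, rfl⟩ := hφsurj _ _ (hj k.le_succ) v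
    exact ⟨u, rfl⟩
  obtain ⟨x, hx_coord, hx⟩ := exists_invLim_seq_smul_succ_eq
    (f := fun k l h => φ (j k) (j l) (hj h)) (fun k => hφid (j k))
    (fun _ _ _ _ _ => hφcomp _ _ _ _ _) _ hsucc ((g : ∀ i, M i) (j 0))
  have hx0 : e.symm (x 0) ≠ 0 := fun h => hi₀ <| by
    rw [← g.2 i₀ (j 0) hi₀j, ← hx_coord, e.symm_apply_eq.1 h, map_zero]
    exact map_zero _
  obtain ⟨D, hD, hDdiv⟩ := exists_isDivisible_ne_bot_of_succ_smul_eq (x := fun m => e.symm (x m))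
    hx0 fun m => by simp only [← map_zsmul, hx]
  exact ⟨⟨D, hD, hDdiv⟩, fun _ => hD (AddSubgroup.eq_bot_of_isDivisible hDdiv)⟩

/-- If a nonzero abelian group is the inverse limit of a countable directed system of
divisible abelian groups with surjective transition maps and at least one nonzero term,
then it contains a nonzero divisible subgroup; in particular it is not a (nonzero)
finitely generated abelian group. -/
theorem invLim_divisible_contains_divisible (ι : Type) [Preorder ι] [IsDirected ι (· ≤ ·)]
    [Countable ι] [Nonempty ι]
    (M : ι → Type) [∀ i, AddCommGroup (M i)]
    (φ : ∀ i j : ι, i ≤ j → (M j →ₗ[ℤ] M i))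
    (hφid : ∀ i, φ i i le_rfl = LinearMap.id)
    (hφcomp : ∀ (i j k : ι) (hij : i ≤ j) (hjk : j ≤ k),
      (φ i j hij).comp (φ j k hjk) = φ i k (hij.trans hjk))
    (hdiv : ∀ (i : ι) (n : ℤ), n ≠ 0 → Function.Surjective (fun y : M i => n • y))
    (hφsurj : ∀ (i j : ι) (h : i ≤ j), Function.Surjective (φ i j h))
    (hM : Nontrivial ↥(invLim M φ))
    (hterm : ∃ (a : ι) (y : M a), y ≠ 0) :
    (∃ D : AddSubgroup ↥(invLim M φ), D ≠ ⊥ ∧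
      ∀ (n : ℤ), n ≠ 0 → ∀ x ∈ D, ∃ y ∈ D, n • y = x) ∧
    ¬ AddGroup.FG ↥(invLim M φ) :=
  invLim_divisible_contains_divisible_general ι M φ hφid hφcomp hdiv hφsurj hM
end

section
/- Let $R$ be a ring, $\mathbf{M}$ a class of left $R$-modules, $\kappa$ an infinite regular cardinal such that $\mathbf{M}$ is closed under $\kappa$-restricted direct products, and $0 \to A \to M \xrightarrow{f} N$ an exact sequence with $M, N \in \mathbf{M}$. Then $A$ is the inverse limit (intersection) of a downward directed family of modules in $\mathbf{M}$ with one-to-one transition maps. -/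
universe u

open Cardinal

/-!
Take `I` of cardinality `κ` and `P = M × ∏^κ_I N`, which is the `κ`-restricted product of the
family `M, N, N, …` indexed by `Option I`. For `X ⊆ I` with `#X < κ` let `S_X ⊆ P` consist of the
`(m, b)` with `b i = f m` for `i ∈ X`. Forgetting the coordinates in `X` identifies `S_X` with
`M × ∏^κ_{I ∖ X} N`, again a restricted product of members of `𝓜`, and `S_{X ∪ Y} = S_X ⊓ S_Y`.
On the intersection `b` is constantly `f m`; a nonzero constant has support of size `κ`, so the
intersection is `ker f × 0 ≅ A`.
-/

section RestrictedProd

variable {R : Type u} [Ring R] {κ : Cardinal.{u}}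

theorem mem_restrictedProd {hκ : ℵ₀ ≤ κ} {I : Type u} {G : I → Type u}
    [∀ i, AddCommGroup (G i)] [∀ i, Module R (G i)] {x : ∀ i, G i} :
    x ∈ restrictedProd R G κ hκ ↔ #{i | x i ≠ 0} < κ :=
  Iff.rfl

variable (hκ : ℵ₀ ≤ κ) {N : Type u} [AddCommGroup N] [Module R N]

theorem comp_mem_restrictedProd {I J : Type u} {e : J → I} (he : Function.Injective e)
    {b : I → N} (hb : b ∈ restrictedProd R (fun _ => N) κ hκ) :
    b ∘ e ∈ restrictedProd R (fun _ => N) κ hκ :=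
  (mk_preimage_of_injective e {i | b i ≠ 0} he).trans_lt hb

open scoped Classical in
theorem dite_mem_restrictedProd {I : Type u} {X : Set I} (hX : #X < κ) (c : N)
    {b : ↥Xᶜ → N} (hb : b ∈ restrictedProd R (fun _ => N) κ hκ) :
    (fun i => if h : i ∈ X then c else b ⟨i, h⟩) ∈ restrictedProd R (fun _ => N) κ hκ := by
  have hsub : {i | (if h : i ∈ X then c else b ⟨i, h⟩) ≠ 0} ⊆
      X ∪ Subtype.val '' {j | b j ≠ 0} := by
    intro i hi
    by_cases h : i ∈ X
    · exact Or.inl h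
    · exact Or.inr ⟨⟨i, h⟩, by simpa [h] using hi, rfl⟩
  exact (mk_le_mk_of_subset hsub).trans_lt <| (mk_union_le _ _).trans_lt <|
    add_lt_of_lt hκ hX (mk_image_le.trans_lt hb)

theorem eq_zero_of_const_mem_restrictedProd {I : Type u} (hI : κ ≤ #I) {c : N}
    (hc : (fun _ : I => c) ∈ restrictedProd R (fun _ => N) κ hκ) : c = 0 := by
  by_contra h
  have huniv : {_i : I | c ≠ 0} = Set.univ := Set.eq_univ_of_forall fun _ => h
  rw [mem_restrictedProd, huniv, mk_univ] at hc
  exact hc.not_ge hI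

end RestrictedProd

theorem mk_lt_iff_mk_preimage_some_lt {κ : Cardinal.{u}} (hκ : ℵ₀ ≤ κ) {I : Type u}
    (S : Set (Option I)) : #S < κ ↔ #(some ⁻¹' S) < κ := by
  refine ⟨(mk_preimage_of_injective _ _ (Option.some_injective I)).trans_lt, fun h => ?_⟩
  have hsub : S ⊆ insert none (some '' (some ⁻¹' S)) := by
    rintro (_ | i) hi
    · exact Set.mem_insert _ _
    · exact Or.inr ⟨i, hi, rfl⟩
  exact (mk_le_mk_of_subset hsub).trans_lt <| mk_insert_le.trans_lt <|
    add_lt_of_lt hκ (mk_image_le.trans_lt h) (one_lt_aleph0.trans_le hκ)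

section OptionFamily

variable {R : Type u} [Ring R] (M N : ModuleCat.{u} R) (I : Type u)

def optionFamily : Option I → ModuleCat.{u} R := fun j => j.elim M fun _ => N

variable {κ : Cardinal.{u}} (hκ : ℵ₀ ≤ κ)

def restrictedProdOptionEquiv : restrictedProd R (fun j => ↥(optionFamily M N I j)) κ hκ ≃ₗ[R]
    M × restrictedProd R (fun _ : I => ↥N) κ hκ where
  toFun x := (x.1 none, ⟨fun i => x.1 (some i), (mk_lt_iff_mk_preimage_some_lt hκ _).1 x.2⟩)
  invFun p := ⟨fun j => Option.rec (motive := fun j => ↥(optionFamily M N I j)) p.1 p.2.1 j,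
    (mk_lt_iff_mk_preimage_some_lt hκ _).2 p.2.2⟩
  map_add' _ _ := rfl
  map_smul' _ _ := rfl
  left_inv x := Subtype.ext <| funext fun j => by cases j <;> rfl
  right_inv _ := rfl

end OptionFamily

section AgreeOn

variable {R : Type u} [Ring R] {κ : Cardinal.{u}} (hκ : ℵ₀ ≤ κ)
  {M N : Type u} [AddCommGroup M] [Module R M] [AddCommGroup N] [Module R N]
  (f : M →ₗ[R] N) {I : Type u}

def agreeOn (X : Set I) : Submodule R (M × restrictedProd R (fun _ : I => N) κ hκ) :=
  ⨅ i ∈ X, LinearMap.eqLocus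
    (LinearMap.proj i ∘ₗ Submodule.subtype _ ∘ₗ LinearMap.snd R M _) (f ∘ₗ LinearMap.fst R M _)

variable {hκ f}

theorem mem_agreeOn {X : Set I} {p : M × restrictedProd R (fun _ : I => N) κ hκ} :
    p ∈ agreeOn hκ f X ↔ ∀ i ∈ X, p.2.1 i = f p.1 := by
  simp [agreeOn, Submodule.mem_iInf, LinearMap.mem_eqLocus]

theorem agreeOn_union (X Y : Set I) :
    agreeOn hκ f (X ∪ Y) = agreeOn hκ f X ⊓ agreeOn hκ f Y :=
  iInf_union

variable (hκ f)

open scoped Classical in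
noncomputable def agreeOnEquiv {X : Set I} (hX : #X < κ) :
    agreeOn hκ f X ≃ₗ[R] M × restrictedProd R (fun _ : ↥Xᶜ => N) κ hκ where
  toFun p :=
    (p.1.1, ⟨p.1.2.1 ∘ Subtype.val, comp_mem_restrictedProd hκ Subtype.val_injective p.1.2.2⟩)
  invFun q := ⟨(q.1, ⟨fun i => if h : i ∈ X then f q.1 else q.2.1 ⟨i, h⟩,
      dite_mem_restrictedProd hκ hX _ q.2.2⟩), mem_agreeOn.2 fun i hi => dif_pos hi⟩
  map_add' _ _ := rfl
  map_smul' _ _ := rfl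
  left_inv p := by
    refine Subtype.ext <| Prod.ext rfl <| Subtype.ext <| funext fun i => ?_
    by_cases h : i ∈ X
    · simp [h, mem_agreeOn.1 p.2 i h]
    · simp [h]
  right_inv q := Prod.ext rfl <| Subtype.ext <| funext fun j => dif_neg j.2

theorem iInf_agreeOn (hI : κ ≤ #I) :
    ⨅ X : {X : Set I // #X < κ}, agreeOn hκ f X.1 = (LinearMap.ker f).prod ⊥ := by
  have hsingleton (i : I) : #({i} : Set I) < κ := by
    simpa using one_lt_aleph0.trans_le hκ
  ext p
  simp only [Submodule.mem_iInf, mem_agreeOn, Submodule.mem_prod, LinearMap.mem_ker,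
    Submodule.mem_bot]
  constructor
  · intro hp
    have hconst : p.2.1 = fun _ => f p.1 := funext fun i => hp ⟨{i}, hsingleton i⟩ i rfl
    have hf : f p.1 = 0 :=
      eq_zero_of_const_mem_restrictedProd hκ hI (hconst ▸ p.2.2)
    exact ⟨hf, Subtype.ext (hconst.trans (funext fun _ => hf))⟩
  · rintro ⟨hf, h2⟩ X i _
    simp [h2, hf]

end AgreeOn

/-- Corollary (a): if `𝓜` is a class of left `R`-modules closed under `κ`-restricted
direct products (`κ` an infinite regular cardinal), and `0 → A → M → N` is exact with
`M, N ∈ 𝓜`, then `A` is the intersection (inverse limit) of a downward directed family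
of submodules, each isomorphic to a member of `𝓜`, with one-to-one transition maps. -/
theorem ker_eq_directed_inter (R : Type u) [Ring R] (κ : Cardinal.{u})
    (hreg : κ.IsRegular) (𝓜 : ModuleCat.{u} R → Prop)
    (hprod : ∀ (I : Type u) (G : I → ModuleCat.{u} R), (∀ i, 𝓜 (G i)) →
      ∃ P : ModuleCat.{u} R, 𝓜 P ∧
        Nonempty (↥(restrictedProd R (fun i => ↥(G i)) κ hreg.aleph0_le) ≃ₗ[R] ↥P))
    (A : Type u) [AddCommGroup A] [Module R A]
    (M N : ModuleCat.{u} R) (hM : 𝓜 M) (hN : 𝓜 N)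
    (f : M →ₗ[R] N) (g : A →ₗ[R] M)
    (hg : Function.Injective g) (hexact : LinearMap.range g = LinearMap.ker f) :
    ∃ (P : ModuleCat.{u} R) (ι : Type u) (S : ι → Submodule R P),
      Nonempty ι ∧
      (∀ i j : ι, ∃ k : ι, S k ≤ S i ⊓ S j) ∧
      (∀ i, ∃ Q : ModuleCat.{u} R, 𝓜 Q ∧ Nonempty (↥(S i) ≃ₗ[R] ↥Q)) ∧
      Nonempty (A ≃ₗ[R] ↥(⨅ i, S i)) := by
  have hκ := hreg.aleph0_le
  have hI : κ ≤ #κ.out := (mk_out κ).ge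
  refine ⟨ModuleCat.of R (M × restrictedProd R (fun _ : κ.out => ↥N) κ hκ),
    {X : Set κ.out // #X < κ}, fun X => agreeOn hκ f X.1,
    ⟨⟨∅, by simpa using aleph0_pos.trans_le hκ⟩⟩,
    fun X Y => ⟨⟨X.1 ∪ Y.1, (mk_union_le _ _).trans_lt (add_lt_of_lt hκ X.2 Y.2)⟩,
      (agreeOn_union X.1 Y.1).le⟩, fun X => ?_, ?_⟩
  · obtain ⟨Q, hQ, ⟨e⟩⟩ := hprod _ (optionFamily M N ↥X.1ᶜ) (by rintro (_ | _) <;> assumption)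
    exact ⟨Q, hQ, ⟨(agreeOnEquiv hκ f X.2).trans
      ((restrictedProdOptionEquiv M N _ hκ).symm.trans e)⟩⟩
  · rw [iInf_agreeOn hκ f hI, ← Submodule.map_inl]
    exact ⟨(LinearEquiv.ofInjective g hg).trans <| (LinearEquiv.ofEq _ _ hexact).trans <|
      Submodule.equivMapOfInjective _ LinearMap.inl_injective _⟩
end

section
/- Let $R$ be a ring and $A$ a left $R$-module that is the kernel of a homomorphism between two projective left $R$-modules. Then $A$ can be written as the inverse limit of an $\omega_1$-indexed system of projective left $R$-modules with surjective transition maps. -/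
/-!
For `a < ω₁` let `S a` be the set of injections of `a` into `ℕ` with coinfinite range. Restriction
makes this an inverse system of nonempty sets with surjective maps (every `a` is countable, so an
injection extends while keeping infinitely many values free) and empty limit (a thread would
inject `ω₁` into `ℕ`). Put `P a := M ×_N N^(S a)`, the pullback of `f` and of the augmentation
`N^(S a) → N`: it is a retract of `M × N^(S a)`, hence projective, and the transition maps are
surjective. In a thread `(m, v_a)` of the `P a`, the support sizes of the `v_a` are eventually
constant because countable subsets of `ω₁` are bounded; from then on restriction is a bijection
between supports, so a nonzero `v_a` would produce a thread of the `S a`. Hence all `v_a = 0`,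
`f m = 0`, and the limit is `ker f ≅ A`.
-/

universe u v

open Cardinal Set Function
open scoped Ordinal

def IsThread {ι : Type*} [Preorder ι] {F : ι → Type*} (f : ∀ ⦃a b : ι⦄, a ≤ b → F b → F a)
    (t : ∀ a, F a) : Prop :=
  ∀ ⦃a b⦄ (h : a ≤ b), f h (t b) = t a

theorem Monotone.exists_forall_le_of_bddAbove_range {ι : Type*} [Preorder ι] [Nonempty ι]
    (hσ : ∀ u : ℕ → ι, BddAbove (range u)) {d : ι → ℕ} (hd : Monotone d) :
    ∃ a, ∀ b, d b ≤ d a := by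
  have hbdd : BddAbove (range d) := by
    by_contra hunb
    simp only [not_bddAbove_iff, mem_range, exists_exists_eq_and] at hunb
    choose u hu using hunb
    obtain ⟨b, hb⟩ := hσ u
    exact (hu (d b)).not_ge (hd (hb ⟨d b, rfl⟩))
  obtain ⟨a, ha⟩ := Nat.sSup_mem (range_nonempty d) hbdd
  exact ⟨a, fun b => ha ▸ le_csSup hbdd ⟨b, rfl⟩⟩

namespace Finsupp

variable {α β N : Type*} [AddCommMonoid N] [DecidableEq β] (f : α → β) (v : α →₀ N)

theorem card_support_mapDomain_le_s14 : (mapDomain f v).support.card ≤ v.support.card :=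
  (Finset.card_le_card mapDomain_support).trans Finset.card_image_le

theorem image_support_eq_and_injOn_of_card_le
    (h : v.support.card ≤ (mapDomain f v).support.card) :
    v.support.image f = (mapDomain f v).support ∧ InjOn f v.support := by
  have hcard : (v.support.image f).card = v.support.card :=
    Finset.card_image_le.antisymm (h.trans (Finset.card_le_card mapDomain_support))
  exact ⟨(Finset.eq_of_subset_of_card_le mapDomain_support (hcard ▸ h)).symm,
    Finset.card_image_iff.mp hcard⟩

end Finsupp

section InverseSystem

variable {ι : Type*} [Preorder ι] [IsDirected ι (· ≤ ·)] {S : ι → Type*}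
  {r : ∀ ⦃a b : ι⦄, a ≤ b → S b → S a} [InverseSystem r]

theorem exists_isThread_of_forall_le (c : ι) (t : ∀ a, c ≤ a → S a)
    (ht : ∀ ⦃a b⦄ (hca : c ≤ a) (hab : a ≤ b), r hab (t b (hca.trans hab)) = t a hca) :
    ∃ t', IsThread r t' := by
  choose u hau hcu using fun a => directed_of (· ≤ ·) a c
  have hpush : ∀ a d (hd : u a ≤ d),
      r (hau a) (t (u a) (hcu a)) = r ((hau a).trans hd) (t d ((hcu a).trans hd)) := by
    intro a d hd
    rw [← ht (hcu a) hd, InverseSystem.map_map (f := r)]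
  refine ⟨fun a => r (hau a) (t (u a) (hcu a)), fun a b hab => ?_⟩
  obtain ⟨d, had, hbd⟩ := directed_of (· ≤ ·) (u a) (u b)
  dsimp only
  rw [hpush a d had, hpush b d hbd, InverseSystem.map_map (f := r)]

/-- Once the support sizes stop growing, restriction maps the supports bijectively onto each
other, and lifting one point of a support along these bijections gives a thread. -/
theorem eq_zero_of_isThread_mapDomain (hσ : ∀ u : ℕ → ι, BddAbove (range u))
    (hS : ∀ t, ¬ IsThread r t) {N : Type*} [AddCommMonoid N] {w : ∀ a, S a →₀ N}
    (hw : IsThread (fun _ _ h => Finsupp.mapDomain (r h)) w) : w = 0 := by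
  classical
  replace hw : ∀ ⦃a b⦄ (h : a ≤ b), Finsupp.mapDomain (r h) (w b) = w a := hw
  funext a₀
  by_contra hne
  have : Nonempty ι := ⟨a₀⟩
  have hmono : Monotone fun a => (w a).support.card := fun a b h => by
    simpa only [hw h] using Finsupp.card_support_mapDomain_le_s14 (r h) (w b)
  obtain ⟨a₁, hmax⟩ := hmono.exists_forall_le_of_bddAbove_range hσ
  obtain ⟨c, hac, hc⟩ := directed_of (· ≤ ·) a₀ a₁
  have hbij : ∀ ⦃a b⦄ (hca : c ≤ a) (hab : a ≤ b),
      (w b).support.image (r hab) = (w a).support ∧ InjOn (r hab) (w b).support := by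
    intro a b hca hab
    rw [← hw hab]
    refine Finsupp.image_support_eq_and_injOn_of_card_le _ _ ?_
    rw [hw hab]
    exact (hmax b).trans (hmono (hc.trans hca))
  obtain ⟨t₀, ht₀⟩ : (w c).support.Nonempty := by
    rw [Finset.nonempty_iff_ne_empty, Ne, Finsupp.support_eq_empty]
    intro h
    exact hne (by rw [← hw hac, h, Finsupp.mapDomain_zero, Pi.zero_apply])
  have hlift : ∀ a (hca : c ≤ a), ∃! s, s ∈ (w a).support ∧ r hca s = t₀ := by
    intro a hca
    obtain ⟨himage, hinj⟩ := hbij le_rfl hca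
    obtain ⟨s, hs, hst⟩ := Finset.mem_image.mp (himage ▸ ht₀)
    exact ⟨s, ⟨hs, hst⟩, fun s' ⟨hs', hst'⟩ => hinj hs' hs (hst'.trans hst.symm)⟩
  choose t ht using fun a hca => (hlift a hca).exists
  obtain ⟨t', ht'⟩ := exists_isThread_of_forall_le c t fun a b hca hab =>
    (hlift a hca).unique ⟨(hbij hca hab).1 ▸ Finset.mem_image_of_mem _ (ht b _).1,
      by rw [InverseSystem.map_map (f := r)]; exact (ht b _).2⟩ (ht a hca)
  exact hS t' ht'

end InverseSystem

theorem Function.Injective.exists_injective_extend_nat {α β : Type*} [Countable α] {i : β → α}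
    (hi : Injective i) {e : β → ℕ} (he : Injective e) (hc : (range e)ᶜ.Infinite) :
    ∃ e' : α → ℕ, Injective e' ∧ (range e')ᶜ.Infinite ∧ e' ∘ i = e := by
  obtain ⟨j, hj⟩ := Countable.exists_injective_nat α
  let c : ℕ ↪ ↥(range e)ᶜ := hc.natEmbedding
  -- odd-indexed free values fill the new points, even-indexed ones stay free
  let e' := extend i e fun x => (c (2 * j x + 1) : ℕ)
  have he'_new : ∀ x, x ∉ range i → e' x = c (2 * j x + 1) :=
    fun x hx => extend_apply' _ _ _ fun ⟨b, hb⟩ => hx ⟨b, hb⟩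
  have hc_inj : ∀ {m n}, (c m : ℕ) = c n → m = n := fun h => c.injective (Subtype.ext h)
  have hc_mem : ∀ n b, (c n : ℕ) ≠ e b := fun n b h => (c n).2 ⟨b, h.symm⟩
  refine ⟨e', ?_, ?_, funext fun b => hi.extend_apply e (fun x => (c (2 * j x + 1) : ℕ)) b⟩
  · intro x y hxy
    rcases em (x ∈ range i) with ⟨a, rfl⟩ | hx <;> rcases em (y ∈ range i) with ⟨b, rfl⟩ | hy
    · simp only [e', hi.extend_apply] at hxy; rw [he hxy]
    · simp only [e', hi.extend_apply, he'_new y hy] at hxy; exact absurd hxy.symm (hc_mem _ _)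
    · simp only [e', hi.extend_apply, he'_new x hx] at hxy; exact absurd hxy (hc_mem _ _)
    · rw [he'_new x hx, he'_new y hy] at hxy; exact hj (by have := hc_inj hxy; omega)
  · refine infinite_of_injective_forall_mem (f := fun n => (c (2 * n) : ℕ))
      (fun m n h => by have := hc_inj h; omega) ?_
    rintro n ⟨x, hx⟩
    rcases em (x ∈ range i) with ⟨b, rfl⟩ | hxi
    · simp only [e', hi.extend_apply] at hx; exact hc_mem _ _ hx.symm
    · rw [he'_new x hxi] at hx; have := hc_inj hx; omega

def CoinfiniteInj {X : Type*} (s : Set X) : Type _ :=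
  {e : s → ℕ // Injective e ∧ (range e)ᶜ.Infinite}

namespace CoinfiniteInj

variable {X : Type*}

def restrict {s t : Set X} (h : s ⊆ t) (e : CoinfiniteInj t) : CoinfiniteInj s :=
  ⟨e.1 ∘ inclusion h, e.2.1.comp (inclusion_injective h),
    e.2.2.mono (compl_subset_compl.mpr (range_comp_subset_range _ _))⟩

theorem restrict_surjective {s t : Set X} (h : s ⊆ t) (ht : t.Countable) :
    Surjective (restrict h) := by
  intro e
  have := ht.to_subtype
  obtain ⟨e', he', hc, hcomp⟩ := (inclusion_injective h).exists_injective_extend_nat e.2.1 e.2.2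
  exact ⟨⟨e', he', hc⟩, Subtype.ext hcomp⟩

theorem nonempty {s : Set X} (hs : s.Countable) : Nonempty (CoinfiniteInj s) := by
  have := hs.to_subtype
  obtain ⟨e, he, hc, -⟩ := (injective_of_subsingleton (Empty.elim : Empty → s)
    ).exists_injective_extend_nat (injective_of_subsingleton Empty.elim)
    (by rw [range_eq_empty, compl_empty]; exact infinite_univ)
  exact ⟨⟨e, he, hc⟩⟩

variable {ι : Type*} [Preorder ι] {D : ι → Set X}

theorem inverseSystem (hD : Monotone D) :
    InverseSystem fun a b (h : a ≤ b) => restrict (s := D a) (t := D b) (hD h) where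
  map_self _ _ := rfl
  map_map _ _ _ _ _ _ := rfl

theorem not_isThread [IsDirected ι (· ≤ ·)] (hX : ¬ Countable X) (hD : Monotone D)
    (hcover : ∀ x, ∃ a, x ∈ D a) (t : ∀ a, CoinfiniteInj (D a)) :
    ¬ IsThread (fun a b (h : a ≤ b) => restrict (hD h)) t := by
  intro ht
  choose d hd using hcover
  refine hX (Injective.countable (f := fun x => (t (d x)).1 ⟨x, hd x⟩) fun x y hxy => ?_)
  obtain ⟨m, hxm, hym⟩ := directed_of (· ≤ ·) (d x) (d y)
  have hx : (t (d x)).1 ⟨x, hd x⟩ = (t m).1 ⟨x, hD hxm (hd x)⟩ := by rw [← ht hxm]; rfl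
  have hy : (t (d y)).1 ⟨y, hd y⟩ = (t m).1 ⟨y, hD hym (hd y)⟩ := by rw [← ht hym]; rfl
  exact congrArg Subtype.val ((t m).2.1 (hx.symm.trans (hxy.trans hy)))

end CoinfiniteInj

noncomputable section

namespace PullbackSystem

variable {R : Type u} [Ring R] {N : Type u} [AddCommGroup N] [Module R N]

def augmentation (α : Type u) : (α →₀ N) →ₗ[R] N := Finsupp.lsum ℕ fun _ => LinearMap.id

theorem augmentation_single {α : Type u} (s : α) (n : N) :
    augmentation (R := R) α (Finsupp.single s n) = n :=
  Finsupp.sum_single_index rfl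

theorem augmentation_mapDomain {α β : Type u} (g : α → β) (v : α →₀ N) :
    augmentation (R := R) β (Finsupp.mapDomain g v) = augmentation (R := R) α v :=
  Finsupp.sum_mapDomain_index (fun _ => rfl) fun _ _ _ => rfl

variable {M : Type u} [AddCommGroup M] [Module R M] (f : M →ₗ[R] N) {ι : Type v} (S : ι → Type u)

def obj (a : ι) : Submodule R (M × (S a →₀ N)) :=
  LinearMap.eqLocus (f ∘ₗ LinearMap.fst R M _) (augmentation (R := R) (S a) ∘ₗ LinearMap.snd R M _)

theorem mem_obj {a : ι} {x : M × (S a →₀ N)} :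
    x ∈ obj f S a ↔ f x.1 = augmentation (R := R) (S a) x.2 :=
  Iff.rfl

theorem projective_obj [Module.Projective R M] [Module.Projective R N] (a : ι)
    [Nonempty (S a)] : Module.Projective R (obj f S a) := by
  classical
  obtain ⟨s⟩ := ‹Nonempty (S a)›
  have : Module.Projective R (S a →₀ N) := .of_equiv (finsuppLequivDFinsupp R).symm
  -- the retraction corrects the coefficient at `s` until the augmentation matches `f`
  let ρ : M × (S a →₀ N) →ₗ[R] M × (S a →₀ N) := LinearMap.id + LinearMap.inr R M _ ∘ₗ
    Finsupp.lsingle s ∘ₗ (f ∘ₗ LinearMap.fst R M _ - augmentation (S a) ∘ₗ LinearMap.snd R M _)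
  have hρ : ∀ x, ρ x = x + (0, Finsupp.single s (f x.1 - augmentation (S a) x.2)) :=
    fun _ => rfl
  refine .of_split (obj f S a).subtype (ρ.codRestrict _ fun x => ?_) ?_
  · rw [mem_obj, hρ, Prod.fst_add, Prod.snd_add, add_zero, map_add, augmentation_single]
    abel
  · ext ⟨x, hx⟩ : 2
    simp only [LinearMap.comp_apply, LinearMap.codRestrict_apply, Submodule.subtype_apply, hρ,
      (mem_obj f S).mp hx, sub_self, Finsupp.single_zero, Prod.mk_zero_zero, add_zero,
      LinearMap.id_apply]

variable {S} [Preorder ι] (r : ∀ ⦃a b : ι⦄, a ≤ b → S b → S a)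

def map ⦃a b : ι⦄ (h : a ≤ b) : obj f S b →ₗ[R] obj f S a :=
  (LinearMap.prodMap LinearMap.id (Finsupp.lmapDomain N R (r h))).restrict fun x hx => by
    simpa only [mem_obj, LinearMap.prodMap_apply, LinearMap.id_apply,
      Finsupp.lmapDomain_apply, augmentation_mapDomain] using hx

theorem coe_map_apply ⦃a b : ι⦄ (h : a ≤ b) (x : obj f S b) :
    (map f r h x : M × (S a →₀ N)) = (x.1.1, Finsupp.mapDomain (r h) x.1.2) :=
  rfl

theorem map_surjective ⦃a b : ι⦄ (h : a ≤ b) (hr : Surjective (r h)) :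
    Surjective (map f r h) := by
  rintro ⟨⟨m, v⟩, hv⟩
  obtain ⟨s, hs⟩ := hr.hasRightInverse
  refine ⟨⟨(m, Finsupp.mapDomain s v), by rwa [mem_obj, augmentation_mapDomain]⟩, ?_⟩
  ext : 1
  rw [coe_map_apply, ← Finsupp.mapDomain_comp, hs.comp_eq_id, Finsupp.mapDomain_id]

def toInvLim : LinearMap.ker f →ₗ[R] invLim (fun a => obj f S a) fun _ _ h => map f r h :=
  LinearMap.codRestrict _
    (LinearMap.pi fun a => LinearMap.codRestrict (obj f S a)
      (LinearMap.inl R M (S a →₀ N) ∘ₗ (LinearMap.ker f).subtype)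
      fun m => show f m = augmentation (R := R) (S a) 0 by rw [LinearMap.mem_ker.mp m.2, map_zero])
    fun _ _ _ h => Subtype.ext (Prod.ext rfl (Finsupp.mapDomain_zero (f := r h)))

theorem toInvLim_injective [Nonempty ι] : Injective (toInvLim f r) := fun _ _ h =>
  Subtype.ext (congrArg (fun x => (x.1 (Classical.arbitrary ι)).1.1) h)

variable [InverseSystem r]

theorem map_id (a : ι) : map f r (le_refl a) = LinearMap.id := by
  ext x : 2
  have : r (le_refl a) = id := funext fun x => InverseSystem.map_self (f := r) x
  simp only [coe_map_apply, this, Finsupp.mapDomain_id, LinearMap.id_coe, id_eq]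

theorem map_comp ⦃a b c : ι⦄ (hab : a ≤ b) (hbc : b ≤ c) :
    (map f r hab).comp (map f r hbc) = map f r (hab.trans hbc) := by
  ext x : 2
  have : r hab ∘ r hbc = r (hab.trans hbc) := funext (InverseSystem.map_map (f := r) hab hbc)
  simp only [LinearMap.comp_apply, coe_map_apply, ← Finsupp.mapDomain_comp, this]

variable [IsDirected ι (· ≤ ·)] [Nonempty ι]

theorem toInvLim_surjective (hσ : ∀ u : ℕ → ι, BddAbove (range u)) (hS : ∀ t, ¬ IsThread r t) :
    Surjective (toInvLim f r) := by
  rintro ⟨x, hx⟩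
  obtain ⟨a₀⟩ := ‹Nonempty ι›
  have hfst : ∀ ⦃a b⦄ (h : a ≤ b), (x b).1.1 = (x a).1.1 := fun a b h =>
    congrArg (fun y => y.1.1) (hx a b h)
  have hconst : ∀ a, (x a).1.1 = (x a₀).1.1 := fun a =>
    let ⟨_, hac, ha₀c⟩ := directed_of (· ≤ ·) a a₀
    (hfst hac).symm.trans (hfst ha₀c)
  have hsnd : (fun a => (x a).1.2) = 0 :=
    eq_zero_of_isThread_mapDomain hσ hS fun a b h => congrArg (fun y => y.1.2) (hx a b h)
  have hker : f (x a₀).1.1 = 0 := by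
    rw [(mem_obj f S).mp (x a₀).2, congrFun hsnd a₀, Pi.zero_apply, map_zero]
  refine ⟨⟨_, hker⟩, Subtype.ext (funext fun a => Subtype.ext ?_)⟩
  exact Prod.ext (hconst a).symm (congrFun hsnd a).symm

def kerEquivInvLim (hσ : ∀ u : ℕ → ι, BddAbove (range u)) (hS : ∀ t, ¬ IsThread r t) :
    LinearMap.ker f ≃ₗ[R] invLim (fun a => obj f S a) fun _ _ h => map f r h :=
  .ofBijective (toInvLim f r) ⟨toInvLim_injective f r, toInvLim_surjective f r hσ hS⟩

end PullbackSystem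

end

theorem Ordinal.countable_Iio_of_lt_omega_one {o : Ordinal.{0}} (ho : o < ω₁) :
    (Iio o).Countable := by
  rw [← le_aleph0_iff_set_countable, Cardinal.mk_Iio_ordinal, lift_le_aleph0, ← lt_aleph_one_iff,
    ← lt_ord, ord_aleph]
  exact ho

namespace Omega1

theorem val_lt (a : Omega1) : a.1 < ω₁ := ord_aleph 1 ▸ a.2

theorem countable_Iio (a : Omega1) : (Iio a).Countable :=
  (Ordinal.countable_Iio_of_lt_omega_one (val_lt a)).preimage Subtype.val_injective

theorem bddAbove_range_s14 (u : ℕ → Omega1) : BddAbove (range u) := by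
  have hsup : ⨆ j, (u j).1 < ω₁ := Ordinal.iSup_lt_omega_one fun j => val_lt (u j)
  refine ⟨⟨_, (ord_aleph 1).symm ▸ hsup⟩, ?_⟩
  rintro _ ⟨j, rfl⟩
  exact le_ciSup Ordinal.bddAbove_of_small j

theorem not_countable : ¬ Countable Omega1 := by
  intro h
  have hmk : #Omega1 = lift.{1, 0} (ℵ_ 1) := by
    rw [← card_ord (ℵ_ 1), ← Cardinal.mk_Iio_ordinal]
    rfl
  have := mk_le_aleph0_iff.mpr h
  rw [hmk, lift_le_aleph0] at this
  exact aleph0_lt_aleph_one.not_ge this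

instance inst_s14 : NoMaxOrder Omega1 :=
  ⟨fun a => ⟨⟨Order.succ a.1, (isSuccLimit_ord (aleph0_le_aleph 1)).succ_lt a.2⟩,
    Order.lt_succ a.1⟩⟩

instance inst_s14_2 : Nonempty Omega1 := ⟨⟨0, ord_aleph 1 ▸ Ordinal.omega_pos 1⟩⟩

/-- `Omega1` lives in `Type 1`; indexing the sets `CoinfiniteInj` by this copy of it in `Type`
keeps the modules of the system in `Type`. -/
noncomputable def toType : Omega1 ≃o (ℵ_ 1).ord.ToType := Ordinal.ToType.mk

theorem monotone_Iio_toType : Monotone fun a => Iio (toType a) :=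
  fun _ _ h => Iio_subset_Iio (toType.monotone h)

theorem countable_Iio_toType (a : Omega1) : (Iio (toType a)).Countable :=
  toType.image_Iio a ▸ (countable_Iio a).image toType

theorem exists_mem_Iio_toType (x : (ℵ_ 1 : Cardinal.{0}).ord.ToType) : ∃ a, x ∈ Iio (toType a) :=
  let ⟨a, ha⟩ := exists_gt (toType.symm x)
  ⟨a, toType.symm_apply_lt.mp ha⟩

theorem not_countable_toType : ¬ Countable (ℵ_ 1 : Cardinal.{0}).ord.ToType :=
  fun h => not_countable (toType.toEquiv.countable_iff.mpr h)

end Omega1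

open PullbackSystem in
/-- Any module which is the kernel of a homomorphism of projective modules can be written
as the inverse limit of an `ω₁`-indexed system of projective modules with surjective
transition maps. -/
theorem ker_of_projectives_eq_invLim (R : Type) [Ring R]
    (A : Type) [AddCommGroup A] [Module R A]
    (M N : Type) [AddCommGroup M] [Module R M] [AddCommGroup N] [Module R N]
    (hM : Module.Projective R M) (hN : Module.Projective R N)
    (f : M →ₗ[R] N) (g : A →ₗ[R] M)
    (hg : Function.Injective g) (hexact : LinearMap.range g = LinearMap.ker f) :
    ∃ (P : Omega1 → Type) (_ : ∀ a, AddCommGroup (P a)) (_ : ∀ a, Module R (P a)),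
      ∃ φ : ∀ a b : Omega1, a ≤ b → (P b →ₗ[R] P a),
        (∀ a, φ a a le_rfl = LinearMap.id) ∧
        (∀ (a b c : Omega1) (hab : a ≤ b) (hbc : b ≤ c),
          (φ a b hab).comp (φ b c hbc) = φ a c (hab.trans hbc)) ∧
        (∀ a, Module.Projective R (P a)) ∧
        (∀ (a b : Omega1) (h : a ≤ b), Function.Surjective (φ a b h)) ∧
        Nonempty (A ≃ₗ[R] ↥(invLim P φ)) := by
  let D a := Iio (Omega1.toType a)
  have hD : Monotone D := Omega1.monotone_Iio_toType
  let S a := CoinfiniteInj (D a)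
  let r a b (h : a ≤ b) := CoinfiniteInj.restrict (hD h)
  have := CoinfiniteInj.inverseSystem hD
  have (a : Omega1) : Nonempty (S a) := CoinfiniteInj.nonempty (Omega1.countable_Iio_toType a)
  have hS t := CoinfiniteInj.not_isThread Omega1.not_countable_toType hD
    Omega1.exists_mem_Iio_toType t
  refine ⟨fun a => obj f S a, inferInstance, inferInstance, fun a b h => map f r h, map_id f r,
    map_comp f r, fun a => projective_obj f S a, fun a b h => map_surjective f r h
      (CoinfiniteInj.restrict_surjective _ (Omega1.countable_Iio_toType b)), ⟨?_⟩⟩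
  exact (LinearEquiv.ofInjective g hg).trans
    ((LinearEquiv.ofEq _ _ hexact).trans (kerEquivInvLim f r Omega1.bddAbove_range_s14 hS))
end

section
/- Let $R$ be a commutative principal ideal domain with field of fractions $K \neq R$, having at most countably many primes. Then $K$, as an $R$-module, is the union (direct limit) of a chain of free $R$-submodules of rank 1. Consequently, if $M$ is the inverse limit of a countable directed system of injective $R$-modules with surjective transition maps, then for each index $\alpha$ and each $x \in M_\alpha$, there is an $R$-module homomorphism $K \to M$ whose composite with the projection $M \to M_\alpha$ has $x$ in its image. -/
/-!
Put `w n = (p 0 ⋯ p (n - 1))⁻ⁿ ∈ K` (zero entries of `p` replaced by `1`). Every denominator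
divides some `(p 0 ⋯ p (n - 1))ⁿ`, so `K` is the increasing union of the free modules
`R ∙ w n`, with `w n = t n • w (n + 1)`. A map `K → lim M` is then glued from maps
`R ∙ w n → M (e n)`, `w n ↦ v n`, along a cofinal sequence `e` of indices: injective modules
over a domain are divisible and the transition maps are surjective, so starting from `v 0 = x`
one can choose `v (n + 1)` with `t n • φ (v (n + 1)) = v n`, which is exactly the required
compatibility.
-/

universe u v

open Filter Finset Submodule

section DivisorChain

variable {R : Type*}

theorem pow_prod_range_dvd_of_le [CommMonoid R] (P : ℕ → R) {n m : ℕ} (hnm : n ≤ m) :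
    (∏ i ∈ range n, P i) ^ n ∣ (∏ i ∈ range m, P i) ^ m :=
  (pow_dvd_pow_of_dvd (prod_dvd_prod_of_subset _ _ _ (range_subset_range.2 hnm)) n).trans
    (pow_dvd_pow _ hnm)

theorem exists_dvd_pow_prod_range [CommMonoidWithZero R] [UniqueFactorizationMonoid R]
    {P : ℕ → R} (hP : ∀ q, Prime q → ∃ n, q ∣ P n) {s : R} (hs : s ≠ 0) :
    ∃ n, s ∣ (∏ i ∈ range n, P i) ^ n := by
  induction s using UniqueFactorizationMonoid.induction_on_prime with
  | h₁ => exact absurd rfl hs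
  | h₂ u hu => exact ⟨0, by simpa using hu.dvd⟩
  | h₃ s q hs₀ hq ih =>
    obtain ⟨n, hn⟩ := ih hs₀
    obtain ⟨m, hm⟩ := hP q hq
    set N := max n m + 1
    refine ⟨N, ?_⟩
    calc q * s ∣ (∏ i ∈ range N, P i) * (∏ i ∈ range N, P i) ^ n :=
          mul_dvd_mul (hm.trans (dvd_prod_of_mem _ (mem_range.2 (by omega))))
            (hn.trans (pow_dvd_pow_of_dvd
              (prod_dvd_prod_of_subset _ _ _ (range_subset_range.2 (by omega))) n))
      _ = (∏ i ∈ range N, P i) ^ (n + 1) := (pow_succ' _ _).symm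
      _ ∣ (∏ i ∈ range N, P i) ^ N := pow_dvd_pow _ (by omega)

end DivisorChain

section FractionField

variable {R K : Type*} [CommRing R] [Field K] [Algebra R K]

theorem inv_algebraMap_eq_smul_inv_algebraMap_mul (a : R) {t : R} (ht : algebraMap R K t ≠ 0) :
    (algebraMap R K a)⁻¹ = t • (algebraMap R K (a * t))⁻¹ := by
  rw [Algebra.smul_def, map_mul, mul_inv, mul_left_comm, mul_inv_cancel₀ ht, mul_one]

variable [IsFractionRing R K]

theorem exists_mem_span_inv_algebraMap (z : K) :
    ∃ s ∈ nonZeroDivisors R, z ∈ R ∙ (algebraMap R K s)⁻¹ := by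
  obtain ⟨r, s, hs, rfl⟩ := IsFractionRing.div_surjective (A := R) z
  exact ⟨s, hs, mem_span_singleton.2 ⟨r, by rw [Algebra.smul_def, div_eq_mul_inv]⟩⟩

theorem span_inv_algebraMap_le_of_dvd [IsDomain R] {a b : R} (hb : b ≠ 0) (hab : a ∣ b) :
    R ∙ (algebraMap R K a)⁻¹ ≤ R ∙ (algebraMap R K b)⁻¹ := by
  obtain ⟨t, rfl⟩ := hab
  have ht : algebraMap R K t ≠ 0 :=
    (map_ne_zero_iff _ (IsFractionRing.injective R K)).2 (right_ne_zero_of_mul hb)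
  rw [span_singleton_le_iff_mem, inv_algebraMap_eq_smul_inv_algebraMap_mul a ht]
  exact smul_mem _ _ (mem_span_singleton_self _)

theorem exists_span_singleton_chain_of_prime_seq [IsDomain R] [UniqueFactorizationMonoid R]
    (p : ℕ → R) (hp : ∀ q : R, Prime q → ∃ n, Associated (p n) q) :
    ∃ (w : ℕ → K) (t : ℕ → R), (∀ n, w n ≠ 0) ∧ (∀ n, w n = t n • w (n + 1)) ∧
      ∀ z, ∃ n, z ∈ R ∙ w n := by
  classical
  have hinj := IsFractionRing.injective R K
  set P : ℕ → R := fun i => if p i = 0 then 1 else p i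
  have hP : ∀ q, Prime q → ∃ n, q ∣ P n := by
    intro q hq
    obtain ⟨n, hn⟩ := hp q hq
    have hpn : p n ≠ 0 := (hn.symm.prime hq).ne_zero
    exact ⟨n, by simpa [P, hpn] using hn.symm.dvd⟩
  set D : ℕ → R := fun n => (∏ i ∈ range n, P i) ^ n
  have hD : ∀ n, D n ≠ 0 := fun n =>
    pow_ne_zero _ (prod_ne_zero_iff.2 fun i _ => by by_cases h : p i = 0 <;> simp [P, h])
  have hDdvd : ∀ n, D n ∣ D (n + 1) := fun n => pow_prod_range_dvd_of_le P (n.le_add_right 1)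
  choose t ht using hDdvd
  refine ⟨fun n => (algebraMap R K (D n))⁻¹, t,
    fun n => inv_ne_zero ((map_ne_zero_iff _ hinj).2 (hD n)), fun n => ?_, fun z => ?_⟩
  · show (algebraMap R K (D n))⁻¹ = t n • (algebraMap R K (D (n + 1)))⁻¹
    rw [ht n]
    exact inv_algebraMap_eq_smul_inv_algebraMap_mul _
      ((map_ne_zero_iff _ hinj).2 (right_ne_zero_of_mul (ht n ▸ hD (n + 1))))
  · obtain ⟨s, hs, hz⟩ := exists_mem_span_inv_algebraMap (R := R) z
    obtain ⟨n, hn⟩ := exists_dvd_pow_prod_range hP (nonZeroDivisors.ne_zero hs)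
    exact ⟨n, span_inv_algebraMap_le_of_dvd (hD n) hn hz⟩

end FractionField

theorem monotone_span_singleton_of_eq_smul {R M : Type*} [Semiring R] [AddCommMonoid M]
    [Module R M] {w : ℕ → M} {t : ℕ → R} (hwt : ∀ n, w n = t n • w (n + 1)) :
    Monotone fun n => R ∙ w n :=
  monotone_nat_of_le_succ fun n => (span_singleton_le_iff_mem _ _).2 <| by
    rw [hwt n]; exact smul_mem _ _ (mem_span_singleton_self _)

theorem LinearEquiv.coord_eq_coord_mul {R M : Type*} [CommRing R] [IsDomain R] [AddCommGroup M]
    [Module R M] [Module.IsTorsionFree R M] {w w' : M} (hw : w ≠ 0) (hw' : w' ≠ 0) {t : R}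
    (hwt : w = t • w') {z : M} (hz : z ∈ R ∙ w) (hz' : z ∈ R ∙ w') :
    coord R M w' hw' ⟨z, hz'⟩ = coord R M w hw ⟨z, hz⟩ * t := by
  apply smul_left_injective R hw'
  simp only [coord_apply_smul, mul_smul, ← hwt]

theorem exists_monotone_seq_cofinal {ι : Type*} [Preorder ι] [IsDirected ι (· ≤ ·)] [Countable ι]
    (a : ι) : ∃ e : ℕ → ι, Monotone e ∧ e 0 = a ∧ ∀ j, ∃ n, j ≤ e n := by
  have := Encodable.ofCountable ι
  let _ : Inhabited ι := ⟨a⟩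
  exact ⟨directed_id.sequence id, directed_id.sequence_mono, rfl,
    fun j => ⟨_, directed_id.le_sequence j⟩⟩

theorem Module.Injective.exists_smul_eq {R : Type u} [CommRing R] [IsDomain R] {N : Type u}
    [AddCommGroup N] [Module R N] [Module.Injective R N] {r : R} (hr : r ≠ 0) (y : N) :
    ∃ z : N, r • z = y := by
  obtain ⟨g, hg⟩ := Module.Injective.extension_property R N R R (LinearMap.lsmul R R r)
    (smul_right_injective R hr) (LinearMap.toSpanSingleton R N y)
  refine ⟨g 1, ?_⟩
  rw [← map_smul, smul_eq_mul, mul_one]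
  simpa using LinearMap.congr_fun hg 1

theorem exists_seq_smul_map_succ_eq_s15 {R : Type u} [CommRing R] [IsDomain R] {N : ℕ → Type u}
    [∀ n, AddCommGroup (N n)] [∀ n, Module R (N n)] [∀ n, Module.Injective R (N n)]
    (π : ∀ n, N (n + 1) →ₗ[R] N n) (hπ : ∀ n, Function.Surjective (π n)) {t : ℕ → R}
    (ht : ∀ n, t n ≠ 0) (x : N 0) :
    ∃ v : ∀ n, N n, v 0 = x ∧ ∀ n, t n • π n (v (n + 1)) = v n := by
  have step : ∀ n (y : N n), ∃ u, t n • π n u = y := fun n y => by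
    obtain ⟨z, rfl⟩ := Module.Injective.exists_smul_eq (ht n) y
    obtain ⟨u, rfl⟩ := hπ n z
    exact ⟨u, rfl⟩
  choose lift hlift using step
  exact ⟨fun n => Nat.rec (motive := N) x lift n, rfl, fun n => hlift n _⟩

section ChainGluing

variable {R : Type u} [Ring R] {ι : Type v} [Preorder ι] {M : ι → Type u}
  [∀ i, AddCommGroup (M i)] [∀ i, Module R (M i)] (φ : ∀ i j : ι, i ≤ j → (M j →ₗ[R] M i))
  (hφcomp : ∀ (i j k : ι) (hij : i ≤ j) (hjk : j ≤ k),
    (φ i j hij).comp (φ j k hjk) = φ i k (hij.trans hjk))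
  {K : Type*} [AddCommGroup K] [Module R K] {c : ℕ → Submodule R K} (hc : Monotone c)
  (hcK : ∀ z, ∃ n, z ∈ c n) {e : ℕ → ι} (he : Monotone e) (hcof : ∀ j, ∃ n, j ≤ e n)
  (f : ∀ n, c n →ₗ[R] M (e n))
  (hf : ∀ n z (hz : z ∈ c n), φ (e n) (e (n + 1)) (he (n.le_add_right 1))
    (f (n + 1) ⟨z, hc (n.le_add_right 1) hz⟩) = f n ⟨z, hz⟩)

include hφcomp hf in
theorem map_chain_of_lt {n m : ℕ} (hnm : n < m) {z : K} (hz : z ∈ c n) :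
    φ (e n) (e m) (he hnm.le) (f m ⟨z, hc hnm.le hz⟩) = f n ⟨z, hz⟩ := by
  induction m, hnm using Nat.le_induction with
  | base => exact hf n z hz
  | succ m hnm ih =>
    rw [← hφcomp _ _ _ (he (Nat.le_of_lt hnm)) (he (m.le_add_right 1)), LinearMap.comp_apply,
      hf m z (hc (Nat.le_of_lt hnm) hz), ih]

open Classical in
/-- Junk (`0`) unless `z ∈ c m` and `j ≤ e m`. -/
noncomputable def chainApprox (z : K) (j : ι) (m : ℕ) : M j :=
  if h : z ∈ c m ∧ j ≤ e m then φ j (e m) h.2 (f m ⟨z, h.1⟩) else 0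

theorem chainApprox_of_mem {z : K} {j : ι} {m : ℕ} (hz : z ∈ c m) (hj : j ≤ e m) :
    chainApprox φ f z j m = φ j (e m) hj (f m ⟨z, hz⟩) :=
  dif_pos ⟨hz, hj⟩

include hc hcK he hcof in
theorem eventually_mem_and_le (z : K) (j : ι) : ∀ᶠ m in atTop, z ∈ c m ∧ j ≤ e m := by
  obtain ⟨n, hn⟩ := hcK z
  obtain ⟨n', hn'⟩ := hcof j
  exact ((eventually_ge_atTop n).mono fun m hm => hc hm hn).and
    ((eventually_ge_atTop n').mono fun m hm => hn'.trans (he hm))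

include hφcomp hf in
theorem eventually_chainApprox_eq {z : K} {j : ι} {m₀ : ℕ} (hz : z ∈ c m₀) (hj : j ≤ e m₀) :
    ∀ᶠ m in atTop, chainApprox φ f z j m = chainApprox φ f z j m₀ := by
  filter_upwards [eventually_gt_atTop m₀] with m hm
  rw [chainApprox_of_mem φ f (hc hm.le hz) (hj.trans (he hm.le)), chainApprox_of_mem φ f hz hj,
    ← hφcomp j (e m₀) (e m) hj (he hm.le), LinearMap.comp_apply,
    map_chain_of_lt φ hφcomp hc he f hf hm hz]

include hφcomp hf hcK hcof in
theorem exists_linearMap_eventually_eq_chainApprox (j : ι) :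
    ∃ L : K →ₗ[R] M j, ∀ z, ∀ᶠ m in atTop, chainApprox φ f z j m = L z := by
  have hmem := eventually_mem_and_le hc hcK he hcof
  have hlim : ∀ z, ∃ y, ∀ᶠ m in atTop, chainApprox φ f z j m = y := fun z => by
    obtain ⟨m₀, hz, hj⟩ := (hmem z j).exists
    exact ⟨_, eventually_chainApprox_eq φ hφcomp hc he f hf hz hj⟩
  choose L hL using hlim
  refine ⟨{ toFun := L, map_add' := fun z₁ z₂ => ?_, map_smul' := fun r z => ?_ }, hL⟩
  · obtain ⟨m, ⟨⟨h, h₁⟩, h₂⟩, ⟨hz₁, hj⟩, hz₂, -⟩ :=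
      (((hL (z₁ + z₂)).and (hL z₁)).and (hL z₂)).and ((hmem z₁ j).and (hmem z₂ j)) |>.exists
    rw [← h, ← h₁, ← h₂, chainApprox_of_mem φ f (add_mem hz₁ hz₂) hj,
      chainApprox_of_mem φ f hz₁ hj, chainApprox_of_mem φ f hz₂ hj, ← map_add, ← map_add]
    rfl
  · obtain ⟨m, ⟨h, h₁⟩, hz, hj⟩ := ((hL (r • z)).and (hL z)).and (hmem z j) |>.exists
    rw [RingHom.id_apply, ← h, ← h₁, chainApprox_of_mem φ f (smul_mem _ r hz) hj,
      chainApprox_of_mem φ f hz hj, ← map_smul, ← map_smul]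
    rfl

include hφcomp hf hcK hcof in
theorem exists_linearMap_invLim_of_chain :
    ∃ H : K →ₗ[R] invLim M φ, ∀ n z (hz : z ∈ c n), (H z : ∀ i, M i) (e n) = f n ⟨z, hz⟩ := by
  choose L hL using exists_linearMap_eventually_eq_chainApprox φ hφcomp hc hcK he hcof f hf
  have hmem := eventually_mem_and_le hc hcK he hcof
  have hcompat : ∀ z, LinearMap.pi L z ∈ invLim M φ := fun z i j hij => by
    obtain ⟨m, ⟨hi, hj⟩, hz, hjm⟩ := ((hL i z).and (hL j z)).and (hmem z j) |>.exists
    simp only [LinearMap.pi_apply]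
    rw [← hi, ← hj, chainApprox_of_mem φ f hz hjm, chainApprox_of_mem φ f hz (hij.trans hjm),
      ← LinearMap.comp_apply, hφcomp]
  refine ⟨(LinearMap.pi L).codRestrict _ hcompat, fun n z hz => ?_⟩
  obtain ⟨m, hm, hnm⟩ := ((hL (e n) z).and (eventually_gt_atTop n)).exists
  rw [LinearMap.codRestrict_apply, LinearMap.pi_apply, ← hm,
    chainApprox_of_mem φ f (hc hnm.le hz) (he hnm.le), map_chain_of_lt φ hφcomp hc he f hf hnm hz]

end ChainGluing

theorem exists_linearMap_invLim_apply_eq {R : Type u} [CommRing R] [IsDomain R] {K : Type*}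
    [AddCommGroup K] [Module R K] [Module.IsTorsionFree R K] {w : ℕ → K} {t : ℕ → R}
    (hw : ∀ n, w n ≠ 0) (hwt : ∀ n, w n = t n • w (n + 1)) (hK : ∀ z, ∃ n, z ∈ R ∙ w n)
    {ι : Type v} [Preorder ι] [IsDirected ι (· ≤ ·)] [Countable ι] {M : ι → Type u}
    [∀ i, AddCommGroup (M i)] [∀ i, Module R (M i)] [∀ i, Module.Injective R (M i)]
    (φ : ∀ i j : ι, i ≤ j → (M j →ₗ[R] M i))
    (hφcomp : ∀ (i j k : ι) (hij : i ≤ j) (hjk : j ≤ k),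
      (φ i j hij).comp (φ j k hjk) = φ i k (hij.trans hjk))
    (hφsurj : ∀ (i j : ι) (h : i ≤ j), Function.Surjective (φ i j h)) (a : ι) (x : M a) :
    ∃ H : K →ₗ[R] invLim M φ, (H (w 0) : ∀ i, M i) a = x := by
  obtain ⟨e, he, rfl, hcof⟩ := exists_monotone_seq_cofinal a
  have ht : ∀ n, t n ≠ 0 := fun n h => hw n (by rw [hwt n, h, zero_smul])
  obtain ⟨v, rfl, hv⟩ := exists_seq_smul_map_succ_eq_s15 (N := fun n => M (e n))
    (fun n => φ _ _ (he (n.le_add_right 1))) (fun n => hφsurj _ _ _) ht x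
  let f n : (R ∙ w n) →ₗ[R] M (e n) :=
    LinearMap.toSpanSingleton R _ (v n) ∘ₗ (LinearEquiv.coord R K (w n) (hw n)).toLinearMap
  have hf : ∀ n z (hz : z ∈ R ∙ w n), φ _ _ (he (n.le_add_right 1))
      (f (n + 1) ⟨z, monotone_span_singleton_of_eq_smul hwt (n.le_add_right 1) hz⟩) =
        f n ⟨z, hz⟩ := by
    intro n z hz
    simp only [f, LinearMap.comp_apply, LinearEquiv.coe_coe, LinearMap.toSpanSingleton_apply,
      map_smul]
    rw [LinearEquiv.coord_eq_coord_mul (hw n) (hw (n + 1)) (hwt n) hz, mul_smul, hv]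
  obtain ⟨H, hH⟩ := exists_linearMap_invLim_of_chain φ hφcomp
    (monotone_span_singleton_of_eq_smul hwt) hK he hcof f hf
  refine ⟨H, ?_⟩
  rw [hH 0 (w 0) (mem_span_singleton_self _)]
  simp [f, LinearEquiv.coord_self]

theorem fractionField_chain_and_factor_general (R : Type) [CommRing R] [IsDomain R]
    [IsPrincipalIdealRing R]
    (K : Type) [Field K] [Algebra R K] [IsFractionRing R K]
    (p : ℕ → R) (hp : ∀ q : R, Prime q → ∃ n, Associated (p n) q)
    (ι : Type) [Preorder ι] [IsDirected ι (· ≤ ·)] [Countable ι]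
    (M : ι → Type) [∀ i, AddCommGroup (M i)] [∀ i, Module R (M i)]
    (φ : ∀ i j : ι, i ≤ j → (M j →ₗ[R] M i))
    (hφcomp : ∀ (i j k : ι) (hij : i ≤ j) (hjk : j ≤ k),
      (φ i j hij).comp (φ j k hjk) = φ i k (hij.trans hjk))
    (hMinj : ∀ i, Module.Injective R (M i))
    (hφsurj : ∀ (i j : ι) (h : i ≤ j), Function.Surjective (φ i j h)) :
    (∃ c : ℕ → Submodule R K, Monotone c ∧
      (∀ n, ∃ x : K, x ≠ 0 ∧ c n = Submodule.span R {x}) ∧ (⨆ n, c n) = ⊤) ∧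
    (∀ (a : ι) (x : M a), ∃ (h : K →ₗ[R] ↥(invLim M φ)) (q : K),
      ((h q : ∀ i, M i) a) = x) := by
  obtain ⟨w, t, hw, hwt, hK⟩ := exists_span_singleton_chain_of_prime_seq (K := K) p hp
  refine ⟨⟨fun n => R ∙ w n, monotone_span_singleton_of_eq_smul hwt, fun n => ⟨w n, hw n, rfl⟩,
    eq_top_iff'.2 fun z => (hK z).elim fun n hn => mem_iSup_of_mem n hn⟩, fun a x => ?_⟩
  obtain ⟨H, hH⟩ := exists_linearMap_invLim_apply_eq hw hwt hK φ hφcomp hφsurj a x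
  exact ⟨H, w 0, hH⟩

/-- Over a PID `R` (not a field) with at most countably many primes and fraction field
`K`, the module `K` is the union of a chain of free rank-one submodules; consequently,
if `M` is a countable inverse limit of injective `R`-modules along surjections, every
element of every term `M_α` lies in the image of the composite of some homomorphism
`K → M` with the projection `M → M_α`. -/
theorem fractionField_chain_and_factor (R : Type) [CommRing R] [IsDomain R]
    [IsPrincipalIdealRing R] (hnf : ¬ IsField R)
    (K : Type) [Field K] [Algebra R K] [IsFractionRing R K]
    (p : ℕ → R) (hp : ∀ q : R, Prime q → ∃ n, Associated (p n) q)
    (ι : Type) [Preorder ι] [IsDirected ι (· ≤ ·)] [Countable ι] [Nonempty ι]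
    (M : ι → Type) [∀ i, AddCommGroup (M i)] [∀ i, Module R (M i)]
    (φ : ∀ i j : ι, i ≤ j → (M j →ₗ[R] M i))
    (hφid : ∀ i, φ i i le_rfl = LinearMap.id)
    (hφcomp : ∀ (i j k : ι) (hij : i ≤ j) (hjk : j ≤ k),
      (φ i j hij).comp (φ j k hjk) = φ i k (hij.trans hjk))
    (hMinj : ∀ i, Module.Injective R (M i))
    (hφsurj : ∀ (i j : ι) (h : i ≤ j), Function.Surjective (φ i j h)) :
    (∃ c : ℕ → Submodule R K, Monotone c ∧
      (∀ n, ∃ x : K, x ≠ 0 ∧ c n = Submodule.span R {x}) ∧ (⨆ n, c n) = ⊤) ∧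
    (∀ (a : ι) (x : M a), ∃ (h : K →ₗ[R] ↥(invLim M φ)) (q : K),
      ((h q : ∀ i, M i) a) = x) :=
  fractionField_chain_and_factor_general R K p hp ι M φ hφcomp hMinj hφsurj
end

section
/- Let $x$ be an element of the inverse limit of an $\omega_1$-indexed system of direct sums $\bigoplus_{S_\alpha} N$ (for $N$ a module and $(S_\alpha, f_{\alpha\beta})$ an inverse system of sets with surjective maps) with transition maps summing components over fibers. If $T_\alpha$ denotes the support of the $\alpha$-th component of $x$, then the cardinalities $|T_\alpha|$ are nondecreasing in $\alpha$ and their supremum is finite. -/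
universe u v

/-! Pushing a finitely supported function forward along a map cannot enlarge its support,
so `|T_α| ≤ |T_β|` for `α ≤ β`. If the cardinalities were unbounded, indices `α_n` with
`n < |T_{α_n}|` would have a common upper bound `β < ω₁`, as `ω₁` has uncountable
cofinality, and then `n < |T_β|` for every `n`. -/

open Cardinal

theorem Finsupp.card_support_mapDomain_le_s16 {α β M : Type*} [AddCommMonoid M] (g : α → β)
    (v : α →₀ M) : (v.mapDomain g).support.card ≤ v.support.card := by
  classical
  exact (Finset.card_le_card mapDomain_support).trans Finset.card_image_le

theorem Omega1.bddAbove_range_s16 {ι : Type} [Countable ι] (a : ι → Omega1) :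
    BddAbove (Set.range a) := by
  have hι : #ι < aleph 1 := mk_le_aleph0.trans_lt aleph0_lt_aleph_one
  have hsup : ⨆ i, (a i).1 < (aleph 1).ord :=
    Ordinal.iSup_lt_of_lt_cof (by rwa [isRegular_aleph_one.cof_ord]) fun i => (a i).2
  exact ⟨⟨_, hsup⟩, Set.forall_mem_range.2 fun i => Ordinal.le_iSup (fun i => (a i).1) i⟩

theorem Monotone.bddAbove_range_of_bddAbove_range_seq {ι : Type*} [Preorder ι] {g : ι → ℕ}
    (hg : Monotone g) (hseq : ∀ a : ℕ → ι, BddAbove (Set.range a)) :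
    BddAbove (Set.range g) := by
  by_contra hunb
  obtain ⟨a, ha⟩ : ∃ a : ℕ → ι, ∀ n, n < g (a n) := by
    simpa [bddAbove_def, Classical.skolem] using hunb
  obtain ⟨b, hb⟩ := hseq a
  exact (ha (g b)).not_ge (hg (hb ⟨g b, rfl⟩))

theorem support_card_monotone_bounded_general (R : Type) [Ring R]
    (N : Type) [AddCommGroup N] [Module R N]
    (S : Omega1 → Type) (f : ∀ a b : Omega1, a ≤ b → S b → S a)
    (x : ↥(invLim (fun a => S a →₀ N) (fun a b h => Finsupp.lmapDomain N R (f a b h)))) :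
    (∀ (a b : Omega1) (h : a ≤ b),
      ((x : ∀ a, S a →₀ N) a).support.card ≤ ((x : ∀ a, S a →₀ N) b).support.card) ∧
    ∃ B : ℕ, ∀ a : Omega1, ((x : ∀ a, S a →₀ N) a).support.card ≤ B := by
  have mono : Monotone fun a => ((x : ∀ a, S a →₀ N) a).support.card := fun a b h => by
    dsimp only
    rw [← x.2 a b h]
    exact Finsupp.card_support_mapDomain_le_s16 _ _
  obtain ⟨B, hB⟩ := mono.bddAbove_range_of_bddAbove_range_seq Omega1.bddAbove_range_s16
  exact ⟨fun a b h => mono h, B, fun a => hB ⟨a, rfl⟩⟩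

/-- For an element `x` of the inverse limit of the system of direct sums `⊕_{S_α} N`
(transition maps summing over fibers of surjections `S_β → S_α`), the supports `T_α` of
the components of `x` have nondecreasing cardinalities, with finite supremum. -/
theorem support_card_monotone_bounded (R : Type) [Ring R]
    (N : Type) [AddCommGroup N] [Module R N]
    (S : Omega1 → Type) (f : ∀ a b : Omega1, a ≤ b → S b → S a)
    (hid : ∀ (a : Omega1) (x : S a), f a a le_rfl x = x)
    (hcomp : ∀ (a b c : Omega1) (hab : a ≤ b) (hbc : b ≤ c) (x : S c),
      f a b hab (f b c hbc x) = f a c (hab.trans hbc) x)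
    (hsurj : ∀ (a b : Omega1) (h : a ≤ b), Function.Surjective (f a b h))
    (x : ↥(invLim (fun a => S a →₀ N) (fun a b h => Finsupp.lmapDomain N R (f a b h)))) :
    (∀ (a b : Omega1) (h : a ≤ b),
      ((x : ∀ a, S a →₀ N) a).support.card ≤ ((x : ∀ a, S a →₀ N) b).support.card) ∧
    ∃ B : ℕ, ∀ a : Omega1, ((x : ∀ a, S a →₀ N) a).support.card ≤ B :=
  support_card_monotone_bounded_general R N S f x
end
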